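/- arXiv:1612.06701 — 6 statements merged into one kernel-verified Lean document; each statement's English description precedes it below -/
import Mathlib

section
/- If there exists a t-multimagic square of order m and a t-multimagic square of order n, then there exists a t-multimagic square of order mn. -/
open Finset

/-- An orthogonal array of strength `t` with `k` rows (constraints), columns indexed
by `ι`, symbols in `α`, and index `lam`: in every choice of `t` distinct rows,
every `t`-tuple of symbols appears in exactly `lam` columns. -/
def IsOAOn {α ι : Type*} [Fintype α] [DecidableEq α] [Fintype ι] {k : ℕ} (t : ℕ)
    (A : Fin k → ι → α) (lam : ℕ) : Prop :=
  ∀ rows : Fin t → Fin k, Function.Injective rows → ∀ x : Fin t → α,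
    (Finset.univ.filter fun c : ι => ∀ i, A (rows i) c = x i).card = lam

/-- An array is simple if no two of its columns are identical. -/
def IsSimpleArr {α ι : Type*} {k : ℕ} (A : Fin k → ι → α) : Prop :=
  Function.Injective fun c : ι => fun i => A i c

/-- A large set of orthogonal arrays: a family (indexed by `σ`) of simple OAs of
strength `t` and index `lam` such that every `k`-tuple of symbols occurs as a
column of exactly one array of the family. -/
def IsLOAOn {α ι σ : Type*} [Fintype α] [DecidableEq α] [Fintype ι] {k : ℕ} (t : ℕ)
    (A : σ → Fin k → ι → α) (lam : ℕ) : Prop :=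
  (∀ s, IsOAOn t (A s) lam ∧ IsSimpleArr (A s)) ∧
  ∀ x : Fin k → α, ∃! p : σ × ι, (fun i => A p.1 i p.2) = x

/-- A strong double large set of orthogonal arrays `SDLOA(N; t, k, v)`:
the family `A_0, …, A_{N-1}` is an LOA, the derived arrays `B_j`
(whose `s`-th column is the `j`-th column of `A_s`) form an LOA, and the arrays
`D` (`j`-th column = `j`-th column of `A_j`) and `D'` (`j`-th column =
`(N-1-j)`-th column of `A_j`) are both OAs. -/
def IsSDLOA {α : Type*} [Fintype α] [DecidableEq α] {k N : ℕ} (t : ℕ)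
    (A : Fin N → Fin k → Fin N → α) (lam : ℕ) : Prop :=
  IsLOAOn t A lam ∧
  IsLOAOn t (fun (j : Fin N) (i : Fin k) (s : Fin N) => A s i j) lam ∧
  IsOAOn t (fun (i : Fin k) (j : Fin N) => A j i j) lam ∧
  IsOAOn t (fun (i : Fin k) (j : Fin N) => A j i (Fin.rev j)) lam

/-- A `t`-multimagic square of order `n`: an `n × n` matrix whose entries are the
consecutive integers `0, …, n^2 - 1` and such that, for every `1 ≤ e ≤ t`,
the entrywise `e`-th power has equal row sums, column sums, and sums on both
diagonals. -/
def IsMultimagic (n t : ℕ) (M : Fin n → Fin n → ℕ) : Prop :=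
  (∀ i j, M i j < n ^ 2) ∧
  (Function.Injective fun p : Fin n × Fin n => M p.1 p.2) ∧
  ∀ e, 1 ≤ e → e ≤ t → ∃ S,
    (∀ i, ∑ j, (M i j) ^ e = S) ∧ (∀ j, ∑ i, (M i j) ^ e = S) ∧
    (∑ i, (M i i) ^ e = S) ∧ (∑ i, (M i (Fin.rev i)) ^ e = S)

/-- A set of `m` complementary `t`-multimagic squares of order `n`, `m`-CMS(`n`,`t`):
`m` multimagic squares such that summing the `(t+1)`-st powers of the entries over
all `m` squares along any fixed row, any fixed column, or either diagonal always
gives `m · S_{t+1}(n)` (the conditions are stated multiplied through by `n`). -/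
def IsCMS (m n t : ℕ) (B : Fin m → Fin n → Fin n → ℕ) : Prop :=
  (∀ s, IsMultimagic n t (B s)) ∧
  (∀ i, n * ∑ s, ∑ j, (B s i j) ^ (t + 1) = m * ∑ k ∈ Finset.range (n ^ 2), k ^ (t + 1)) ∧
  (∀ j, n * ∑ s, ∑ i, (B s i j) ^ (t + 1) = m * ∑ k ∈ Finset.range (n ^ 2), k ^ (t + 1)) ∧
  (n * ∑ s, ∑ i, (B s i i) ^ (t + 1) = m * ∑ k ∈ Finset.range (n ^ 2), k ^ (t + 1)) ∧
  (n * ∑ s, ∑ i, (B s i (Fin.rev i)) ^ (t + 1) = m * ∑ k ∈ Finset.range (n ^ 2), k ^ (t + 1))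

/-- Any `t` rows of the matrix `M` are linearly independent. -/
def RowsIndep {F : Type*} [Field F] {m' : Type*} {s : ℕ} (t : ℕ)
    (M : Matrix m' (Fin s) F) : Prop :=
  ∀ rows : Fin t → m', Function.Injective rows → LinearIndependent F fun i => M (rows i)

/-- The block matrix `(A, B)` (with `A, B` of the same shape) is nonsingular, phrased
via bijectivity of the associated linear map. -/
def NonsingularPair {F : Type*} [Field F] {m' : Type*} {s : ℕ}
    (A B : Matrix m' (Fin s) F) : Prop :=
  Function.Bijective fun p : (Fin s → F) × (Fin s → F) => A.mulVec p.1 + B.mulVec p.2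

/-!
Put `n² · A a c + B b d` at position `((a, b), (c, d))`. These are the two-digit base-`n²`
numbers, so every value below `(mn)²` occurs once. Each line of the product square (row,
column, diagonal, antidiagonal) runs over the product of the corresponding lines of `A`
and `B`, so by the binomial theorem its `e`-th power sum is
`∑ₖ (e choose k) n²ᵏ Sₖ(A-line) Sₑ₋ₖ(B-line)`, where `Sₖ` is the `k`-th power sum;
for `e ≤ t` each factor is the same for all lines.
-/

section PowerSums

variable {R ι κ ι' κ' : Type*} [CommSemiring R]
  [Fintype ι] [Fintype κ] [Fintype ι'] [Fintype κ']

theorem sum_sum_pow_mul_add (q : R) (f : ι → R) (g : κ → R) (E : ℕ) :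
    ∑ c, ∑ d, (q * f c + g d) ^ E =
      ∑ k ∈ range (E + 1), q ^ k * (∑ c, f c ^ k) * (∑ d, g d ^ (E - k)) * E.choose k := by
  calc ∑ c, ∑ d, (q * f c + g d) ^ E
      = ∑ c, ∑ d, ∑ k ∈ range (E + 1), q ^ k * f c ^ k * g d ^ (E - k) * E.choose k := by
        simp only [add_pow, mul_pow]
    _ = ∑ k ∈ range (E + 1), ∑ c, ∑ d, q ^ k * f c ^ k * g d ^ (E - k) * E.choose k :=
        (sum_congr rfl fun _ _ => sum_comm).trans sum_comm
    _ = _ := by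
        refine sum_congr rfl fun k _ => ?_
        rw [show ∀ a b : R, q ^ k * a * b * E.choose k = a * b * (q ^ k * E.choose k) by
          intros; ring, sum_mul_sum, sum_mul]
        exact sum_congr rfl fun _ _ => by rw [sum_mul]; exact sum_congr rfl fun _ _ => by ring

theorem sum_sum_pow_mul_add_congr {q : R} {E : ℕ} {f : ι → R} {g : κ → R} {f' : ι' → R}
    {g' : κ' → R} (hf : ∀ k ≤ E, ∑ c, f c ^ k = ∑ c, f' c ^ k)
    (hg : ∀ k ≤ E, ∑ d, g d ^ k = ∑ d, g' d ^ k) :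
    ∑ c, ∑ d, (q * f c + g d) ^ E = ∑ c, ∑ d, (q * f' c + g' d) ^ E := by
  rw [sum_sum_pow_mul_add, sum_sum_pow_mul_add]
  refine sum_congr rfl fun k hk => ?_
  have hk : k ≤ E := Nat.lt_succ_iff.mp (mem_range.mp hk)
  rw [hf k hk, hg (E - k) (Nat.sub_le E k)]

end PowerSums

theorem Nat.eq_and_eq_of_mul_add_eq_mul_add {q a a' b b' : ℕ} (hb : b < q) (hb' : b' < q)
    (h : q * a + b = q * a' + b') : a = a' ∧ b = b' := by
  have hbb' : b = b' := by
    simpa [Nat.mul_add_mod, Nat.mod_eq_of_lt hb, Nat.mod_eq_of_lt hb'] using congrArg (· % q) h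
  subst hbb'
  exact ⟨Nat.eq_of_mul_eq_mul_left (by omega) (Nat.add_right_cancel h), rfl⟩

theorem finProdFinEquiv_symm_rev {m n : ℕ} (i : Fin (m * n)) :
    finProdFinEquiv.symm i.rev =
      ((finProdFinEquiv.symm i).1.rev, (finProdFinEquiv.symm i).2.rev) := by
  obtain ⟨⟨a, b⟩, rfl⟩ := finProdFinEquiv.surjective i
  rw [Equiv.symm_apply_apply, Equiv.symm_apply_eq]
  ext
  simp only [Fin.val_rev, finProdFinEquiv_apply_val]
  have := a.2
  have := b.2
  have h : n * (a + 1) + n * (m - (a + 1)) = m * n := by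
    rw [← Nat.mul_add, Nat.mul_comm]; congr 1; omega
  rw [Nat.mul_add] at h
  omega

theorem sum_finProdFinEquiv_symm {M : Type*} [AddCommMonoid M] {m n : ℕ}
    (F : Fin m × Fin n → M) : ∑ i, F (finProdFinEquiv.symm i) = ∑ c, ∑ d, F (c, d) :=
  (Equiv.sum_comp _ F).trans (Fintype.sum_prod_type F)

namespace IsMultimagic

variable {n t : ℕ} {M : Fin n → Fin n → ℕ}

theorem exists_sum_pow_eq (h : IsMultimagic n t M) {e : ℕ} (he : e ≤ t) : ∃ S,
    (∀ i, ∑ j, M i j ^ e = S) ∧ (∀ j, ∑ i, M i j ^ e = S) ∧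
    ∑ i, M i i ^ e = S ∧ ∑ i, M i i.rev ^ e = S := by
  rcases Nat.eq_zero_or_pos e with rfl | he₀
  · exact ⟨n, by simp⟩
  · exact h.2.2 e he₀ he

theorem sum_row_pow_eq_diag (h : IsMultimagic n t M) {e : ℕ} (he : e ≤ t) (i : Fin n) :
    ∑ j, M i j ^ e = ∑ j, M j j ^ e := by
  obtain ⟨S, hrow, -, hdiag, -⟩ := h.exists_sum_pow_eq he
  rw [hrow, hdiag]

theorem sum_col_pow_eq_diag (h : IsMultimagic n t M) {e : ℕ} (he : e ≤ t) (j : Fin n) :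
    ∑ i, M i j ^ e = ∑ i, M i i ^ e := by
  obtain ⟨S, -, hcol, hdiag, -⟩ := h.exists_sum_pow_eq he
  rw [hcol, hdiag]

theorem sum_antidiag_pow_eq_diag (h : IsMultimagic n t M) {e : ℕ} (he : e ≤ t) :
    ∑ i, M i i.rev ^ e = ∑ i, M i i ^ e := by
  obtain ⟨S, -, -, hdiag, hanti⟩ := h.exists_sum_pow_eq he
  rw [hanti, hdiag]

end IsMultimagic

def prodSquare {m n : ℕ} (A : Fin m → Fin m → ℕ) (B : Fin n → Fin n → ℕ) :
    Fin (m * n) → Fin (m * n) → ℕ := fun i j =>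
  n ^ 2 * A (finProdFinEquiv.symm i).1 (finProdFinEquiv.symm j).1 +
    B (finProdFinEquiv.symm i).2 (finProdFinEquiv.symm j).2

section prodSquare

variable {m n : ℕ} {A : Fin m → Fin m → ℕ} {B : Fin n → Fin n → ℕ}

theorem prodSquare_lt (hA : ∀ a c, A a c < m ^ 2) (hB : ∀ b d, B b d < n ^ 2)
    (i j : Fin (m * n)) :
    prodSquare A B i j < (m * n) ^ 2 :=
  mul_pow m n 2 ▸ Nat.mul_add_lt_mul_of_lt_of_lt (hA _ _) (hB _ _)

theorem prodSquare_injective (hA : Function.Injective fun p : Fin m × Fin m => A p.1 p.2)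
    (hB_lt : ∀ b d, B b d < n ^ 2) (hB : Function.Injective fun p : Fin n × Fin n => B p.1 p.2) :
    Function.Injective fun p : Fin (m * n) × Fin (m * n) => prodSquare A B p.1 p.2 := by
  rintro ⟨i, j⟩ ⟨i', j'⟩ h
  obtain ⟨hAeq, hBeq⟩ := Nat.eq_and_eq_of_mul_add_eq_mul_add (hB_lt _ _) (hB_lt _ _) h
  obtain ⟨hi₁, hj₁⟩ := Prod.ext_iff.mp (@hA (_, _) (_, _) hAeq)
  obtain ⟨hi₂, hj₂⟩ := Prod.ext_iff.mp (@hB (_, _) (_, _) hBeq)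
  simp only [Prod.mk.injEq, ← finProdFinEquiv.symm.injective.eq_iff]
  exact ⟨Prod.ext hi₁ hi₂, Prod.ext hj₁ hj₂⟩

theorem sum_prodSquare_pow_congr {E : ℕ} {f f' : Fin m → ℕ} {g g' : Fin n → ℕ}
    (hf : ∀ k ≤ E, ∑ c, f c ^ k = ∑ c, f' c ^ k)
    (hg : ∀ k ≤ E, ∑ d, g d ^ k = ∑ d, g' d ^ k) :
    ∑ i : Fin (m * n), (n ^ 2 * f (finProdFinEquiv.symm i).1 + g (finProdFinEquiv.symm i).2) ^ E =
      ∑ i : Fin (m * n),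
        (n ^ 2 * f' (finProdFinEquiv.symm i).1 + g' (finProdFinEquiv.symm i).2) ^ E := by
  rw [sum_finProdFinEquiv_symm (fun p => (n ^ 2 * f p.1 + g p.2) ^ E),
    sum_finProdFinEquiv_symm (fun p => (n ^ 2 * f' p.1 + g' p.2) ^ E)]
  exact sum_sum_pow_mul_add_congr hf hg

theorem IsMultimagic.prod {t : ℕ} (hA : IsMultimagic m t A) (hB : IsMultimagic n t B) :
    IsMultimagic (m * n) t (prodSquare A B) := by
  refine ⟨prodSquare_lt hA.1 hB.1, prodSquare_injective hA.2.1 hB.1 hB.2.1,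
    fun E _ hE => ⟨∑ i, prodSquare A B i i ^ E, fun i => ?_, fun j => ?_, rfl, ?_⟩⟩
  · exact sum_prodSquare_pow_congr (fun k hk => hA.sum_row_pow_eq_diag (hk.trans hE) _)
      (fun k hk => hB.sum_row_pow_eq_diag (hk.trans hE) _)
  · exact sum_prodSquare_pow_congr (fun k hk => hA.sum_col_pow_eq_diag (hk.trans hE) _)
      (fun k hk => hB.sum_col_pow_eq_diag (hk.trans hE) _)
  · simp only [prodSquare, finProdFinEquiv_symm_rev]
    exact sum_prodSquare_pow_congr (fun k hk => hA.sum_antidiag_pow_eq_diag (hk.trans hE))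
      (fun k hk => hB.sum_antidiag_pow_eq_diag (hk.trans hE))

end prodSquare

/-- Product construction: an MS(m,t) and an MS(n,t) give an MS(mn,t). -/
theorem multimagic_product (m n t : ℕ)
    (h1 : ∃ M : Fin m → Fin m → ℕ, IsMultimagic m t M)
    (h2 : ∃ M : Fin n → Fin n → ℕ, IsMultimagic n t M) :
    ∃ M : Fin (m * n) → Fin (m * n) → ℕ, IsMultimagic (m * n) t M := by
  obtain ⟨A, hA⟩ := h1
  obtain ⟨B, hB⟩ := h2
  exact ⟨prodSquare A B, hA.prod hB⟩
end

section
/- If there exists a nonsingular k×k matrix E over the finite field F_q containing a k×s submatrix E_1 (consisting of s columns of E) with the property that every t rows of E_1 are linearly independent, then there exists a large set of orthogonal arrays LOA(q^s; t, k, q). -/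
open Finset

/-! Put the `s` chosen columns of `E` first: `E ≃ (E₁ | E₂)` with `E₁` the given `k × s` block.
Since `E` is invertible, every `x ∈ F^k` is uniquely `E₁ v + E₂ w`, so the arrays `A_w` with
columns `E₁ v + E₂ w` (`v ∈ F^s`) partition `F^k`. In `t` distinct rows of `A_w` one reads
`N v + c` for a `t × s` block `N` of `E₁`; its rows are independent, so `v ↦ N v` is onto `F^t`
and each of its fibres, a coset of the kernel, has `q^s / q^t` elements. -/

open Matrix

theorem IsOAOn.reindex {α ι ι' : Type*} [Fintype α] [DecidableEq α] [Fintype ι] [Fintype ι']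
    {k t lam : ℕ} {A : Fin k → ι → α} (hA : IsOAOn t A lam) (e : ι' ≃ ι) :
    IsOAOn t (fun i c => A i (e c)) lam := fun rows hrows x => by
  rw [← hA rows hrows x]
  exact Finset.card_equiv e (by simp)

theorem IsSimpleArr.reindex {α ι ι' : Type*} {k : ℕ} {A : Fin k → ι → α} (hA : IsSimpleArr A)
    (e : ι' ≃ ι) : IsSimpleArr fun i c => A i (e c) :=
  hA.comp e.injective

theorem IsLOAOn.reindex {α ι ι' σ σ' : Type*} [Fintype α] [DecidableEq α] [Fintype ι]
    [Fintype ι'] {k t lam : ℕ} {A : σ → Fin k → ι → α} (hA : IsLOAOn t A lam)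
    (eσ : σ' ≃ σ) (eι : ι' ≃ ι) : IsLOAOn t (fun b i c => A (eσ b) i (eι c)) lam :=
  ⟨fun b => ⟨(hA.1 (eσ b)).1.reindex eι, (hA.1 (eσ b)).2.reindex eι⟩,
    fun x => ((eσ.prodCongr eι).existsUnique_congr_left).2 (by simpa using hA.2 x)⟩

theorem AddMonoidHom.card_fiber_eq_of_surjective {G M Φ : Type*} [AddGroup G] [Fintype G]
    [AddMonoid M] [Fintype M] [DecidableEq M] [FunLike Φ G M] [AddMonoidHomClass Φ G M] (f : Φ)
    (hf : Function.Surjective f) (y : M) : #{g | f g = y} = Fintype.card G / Fintype.card M := by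
  have hsum : Fintype.card G = ∑ z : M, #{g | f g = z} :=
    card_eq_sum_card_fiberwise fun g _ => mem_univ (f g)
  rw [Finset.sum_congr rfl fun z _ =>
    AddMonoidHom.card_fiber_eq_of_mem_range f (hf z) (hf y), sum_const, card_univ,
    smul_eq_mul] at hsum
  rw [hsum, Nat.mul_div_cancel_left _ Fintype.card_pos]

theorem Matrix.mulVec_surjective_of_linearIndependent_row {F m n : Type*} [Field F] [Fintype m]
    [Fintype n] {M : Matrix m n F} (hM : LinearIndependent F M.row) :
    Function.Surjective M.mulVec := by
  have htop : LinearMap.range M.mulVecLin = ⊤ := by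
    apply Submodule.eq_top_of_finrank_eq
    rw [← Matrix.rank, hM.rank_matrix, Module.finrank_fintype_fun_eq_card]
  exact fun y => LinearMap.range_eq_top.1 htop y

theorem Matrix.mulVec_submatrix_bijective_of_isUnit_det {F m n : Type*} [Field F] [Fintype m]
    [DecidableEq m] [Fintype n] (E : Matrix m m F) (hE : IsUnit E.det) (e : n ≃ m) :
    Function.Bijective (E.submatrix id e).mulVec := by
  have hE' : IsUnit E := (Matrix.isUnit_iff_isUnit_det E).2 hE
  have hEbij : Function.Bijective E.mulVec :=
    ⟨mulVec_injective_iff_isUnit.2 hE', mulVec_surjective_iff_isUnit.2 hE'⟩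
  have : (E.submatrix id e).mulVec = E.mulVec ∘ e.arrowCongr (Equiv.refl F) := by
    funext v
    exact submatrix_mulVec_equiv E v id e
  rw [this]
  exact hEbij.comp (Equiv.bijective _)

section

variable {F : Type*} [Field F] [Fintype F] [DecidableEq F] {k s t : ℕ}

theorem isOAOn_mulVec_add (M : Matrix (Fin k) (Fin s) F) (hM : RowsIndep t M)
    (d : Fin k → F) :
    IsOAOn t (fun i (v : Fin s → F) => (M *ᵥ v + d) i)
      (Fintype.card F ^ s / Fintype.card F ^ t) := by
  intro rows hrows x
  let N : Matrix (Fin t) (Fin s) F := M.submatrix rows id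
  have hN : Function.Surjective N.mulVecLin :=
    Matrix.mulVec_surjective_of_linearIndependent_row (hM rows hrows)
  have hfilter : ∀ v : Fin s → F,
      (∀ i, (M *ᵥ v + d) (rows i) = x i) ↔ N.mulVecLin v = x - d ∘ rows := fun v => by
    rw [funext_iff]
    exact forall_congr' fun i => eq_sub_iff_add_eq.symm
  simp_rw [hfilter, AddMonoidHom.card_fiber_eq_of_surjective N.mulVecLin hN]
  simp

theorem isLOAOn_of_bijective_mulVec_fromCols {n : Type*} [Fintype n]
    (A : Matrix (Fin k) (Fin s) F) (B : Matrix (Fin k) n F) (hA : RowsIndep t A)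
    (hAB : Function.Bijective (fromCols A B).mulVec) :
    IsLOAOn t (fun (w : n → F) i (v : Fin s → F) => (A *ᵥ v + B *ᵥ w) i)
      (Fintype.card F ^ s / Fintype.card F ^ t) := by
  let glue : (n → F) × (Fin s → F) ≃ (Fin s ⊕ n → F) :=
    (Equiv.prodComm _ _).trans (Equiv.sumArrowEquivProdArrow _ _ _).symm
  have hglue : ∀ p, (fromCols A B).mulVec (glue p) = A *ᵥ p.2 + B *ᵥ p.1 := fun p =>
    fromCols_mulVec_sumElim A B p.2 p.1
  refine ⟨fun w => ⟨isOAOn_mulVec_add A hA (B *ᵥ w), fun v v' hvv' => ?_⟩, fun x => ?_⟩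
  · have := hAB.injective ((hglue (w, v)).trans (hvv'.trans (hglue (w, v')).symm))
    exact (Prod.ext_iff.1 (glue.injective this)).2
  · exact (glue.existsUnique_congr fun p => by rw [hglue]).2 (hAB.existsUnique x)

end

/-- If a nonsingular `k × k` matrix over `F_q` has a `k × s` submatrix
(consisting of `s` of its columns) in which any `t` rows are linearly independent,
then there exists an LOA(q^s; t, k, q). -/
theorem loa_of_matrix {F : Type} [Field F] [Fintype F] [DecidableEq F] {k s t : ℕ}
    (E : Matrix (Fin k) (Fin k) F) (hE : IsUnit E.det)
    (cols : Fin s → Fin k) (hcols : Function.Injective cols)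
    (h1 : RowsIndep t (Matrix.of fun i j => E i (cols j))) :
    ∃ A : Fin (Fintype.card F ^ (k - s)) → Fin k → Fin (Fintype.card F ^ s) → F,
      IsLOAOn t A (Fintype.card F ^ s / Fintype.card F ^ t) := by
  classical
  let n := {i // i ∉ Set.range cols}
  let e : Fin s ⊕ n ≃ Fin k :=
    ((Equiv.ofInjective cols hcols).sumCongr (Equiv.refl n)).trans (Equiv.sumCompl _)
  have hcard : Fintype.card n = k - s := by
    have := Fintype.card_congr e
    rw [Fintype.card_sum, Fintype.card_fin, Fintype.card_fin] at this
    omega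
  have hsplit : fromCols (Matrix.of fun i j => E i (cols j)) (E.submatrix id (e ∘ Sum.inr)) =
      E.submatrix id e := by
    ext i (j | j) <;> rfl
  have hLOA := isLOAOn_of_bijective_mulVec_fromCols _ _ h1
    (hsplit ▸ E.mulVec_submatrix_bijective_of_isUnit_det hE e)
  exact ⟨_, hLOA.reindex (Fintype.equivFinOfCardEq (by simp [hcard])).symm
    (Fintype.equivFinOfCardEq (by simp)).symm⟩
end

section
/- Suppose there exist q^t strong double large sets of orthogonal arrays SDLOA(q^t; t, 2t, q) over F_q, written as q^t × q^t matrices C_H = (C^{(H)}_{X,Y}) with entries in F_q^{2t}, indexed by H ∈ F_q^t, such that for each X the collection {C^{(H)}_{X,Y} : Y, H ∈ F_q^t}, for each Y the collection {C^{(H)}_{X,Y} : X, H ∈ F_q^t}, the diagonal collection {C^{(H)}_{X,X} : X, H ∈ F_q^t}, and the back-diagonal collection {C^{(H)}_{X, X̃−X} : X, H ∈ F_q^t} each consist of all q^{2t} vectors of F_q^{2t}, each occurring exactly once. Then there exists a q^t-CMS(q^t, t). -/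
open Finset

/-!
Number `F_q^t` and `F_q^{2t}` in base `q` through `ξ`, so that the entry of `Ĉ_H` at `(X, Y)` is
the linear form `∑ᵢ ξ⁻¹(vᵢ) qⁱ` of `v = C^{(H)}_{X,Y}`. Its `e`-th power, `e ≤ t`, expands into
monomials in at most `t` coordinates of `v`, and the columns of an orthogonal array of strength `t`
and index 1 meet every value of any `t` coordinates exactly once, as do the points of `F_q^{2t}`
`q^t` times. Hence along every row, column and diagonal of `Ĉ_H` the `e`-th power sum is `q^{-t}`
times the one over all of `F_q^{2t}`. The relation `ξ_j + ξ_{q-1-j} = ξ_{q-1}` makes the back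
diagonal of the numbered square the line `(X, X̃ - X)`. Finally, the covering conditions on
`R_X, T_Y, U, U'` say that a line taken through all `q^t` squares carries each of
`0, …, q^{2t} - 1` exactly once, which gives the complementarity conditions for every exponent,
in particular `t + 1`.
-/

section OrthogonalArray

variable {α ι : Type*} [Fintype α] [Fintype ι] {k t : ℕ}

theorem IsOAOn.sum_comp [DecidableEq α] {M : Type*} [AddCommMonoid M] {A : Fin k → ι → α}
    {lam : ℕ} (hA : IsOAOn t A lam) {rows : Fin t → Fin k} (hrows : Function.Injective rows)
    (Φ : (Fin t → α) → M) :
    ∑ c, Φ (fun i => A (rows i) c) = lam • ∑ x, Φ x := by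
  rw [← sum_fiberwise univ (fun c i => A (rows i) c), smul_sum]
  refine sum_congr rfl fun x _ => ?_
  rw [sum_congr rfl fun c hc => congrArg Φ (mem_filter.1 hc).2, sum_const,
    ← hA rows hrows x]
  simp only [funext_iff]

theorem sum_comp_restrict {M : Type*} [AddCommMonoid M] (rows : Fin t ↪ Fin k)
    (Φ : (Fin t → α) → M) :
    ∑ v : Fin k → α, Φ (fun i => v (rows i)) = (Fintype.card α ^ (k - t)) • ∑ x, Φ x := by
  classical
  let split := (Equiv.piEquivPiSubtypeProd (· ∈ Set.range rows) fun _ => α).trans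
    ((Equiv.arrowCongr (Equiv.ofInjective rows rows.injective).symm (Equiv.refl α)).prodCongr
      (Equiv.refl _))
  have hcard : Fintype.card {j // j ∉ Set.range rows} = k - t := by
    rw [Fintype.card_subtype_compl, Set.card_range_of_injective rows.injective,
      Fintype.card_fin, Fintype.card_fin]
  calc ∑ v : Fin k → α, Φ (fun i => v (rows i)) = ∑ v, Φ (split v).1 := rfl
    _ = ∑ p : (Fin t → α) × ({j // j ∉ Set.range rows} → α), Φ p.1 :=
        split.sum_comp fun p => Φ p.1
    _ = _ := by
        simp only [Fintype.sum_prod_type, sum_const, card_univ, Fintype.card_fun, hcard,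
          smul_sum]

theorem exists_embedding_range_superset {e : ℕ} (he : e ≤ t) (htk : t ≤ k) (g : Fin e → Fin k) :
    ∃ rows : Fin t ↪ Fin k, ∀ j, ∃ i, rows i = g j := by
  classical
  have hcard : (univ.image g).card ≤ t := card_image_le.trans (by simpa using he)
  obtain ⟨s, hgs, hs⟩ := exists_superset_card_eq hcard (by simpa using htk)
  obtain ⟨rows, hrows⟩ :=
    Function.Embedding.exists_of_card_eq_finset (α := Fin t) (by simpa using hs.symm)
  refine ⟨rows, fun j => ?_⟩
  have : g j ∈ univ.map rows := hrows ▸ hgs (mem_image_of_mem g (mem_univ j))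
  simpa using this

theorem IsOAOn.smul_sum_pow [DecidableEq α] {R : Type*} [CommSemiring R] {A : Fin k → ι → α}
    {lam e : ℕ} (hA : IsOAOn t A lam) (htk : t ≤ k) (he : e ≤ t) (f : Fin k → α → R) :
    lam • ∑ v : Fin k → α, (∑ i, f i (v i)) ^ e
      = (Fintype.card α ^ (k - t)) • ∑ c, (∑ i, f i (A i c)) ^ e := by
  have expand (w : Fin k → α) :
      (∑ i, f i (w i)) ^ e = ∑ g : Fin e → Fin k, ∏ j, f (g j) (w (g j)) := by
    rw [sum_pow', Fintype.piFinset_univ]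
  simp_rw [expand]
  rw [sum_comm, sum_comm (s := univ (α := ι)), smul_sum, smul_sum]
  refine sum_congr rfl fun g _ => ?_
  obtain ⟨rows, hrows⟩ := exists_embedding_range_superset he htk g
  choose r hr using hrows
  let Φ (x : Fin t → α) : R := ∏ j, f (g j) (x (r j))
  have hv : ∑ v : Fin k → α, ∏ j, f (g j) (v (g j)) = ∑ v : Fin k → α, Φ fun i => v (rows i) := by
    simp only [Φ, hr]
  have hc : ∑ c, ∏ j, f (g j) (A (g j) c) = ∑ c, Φ fun i => A (rows i) c := by
    simp only [Φ, hr]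
  rw [hv, hc, sum_comp_restrict, hA.sum_comp rows.injective, smul_comm]

end OrthogonalArray

theorem finFunctionFinEquiv_rev {q n : ℕ} (d : Fin n → Fin q) :
    finFunctionFinEquiv (fun i => (d i).rev) = (finFunctionFinEquiv d).rev := by
  have hsum : ((finFunctionFinEquiv fun i => (d i).rev : ℕ) : ℤ) + (finFunctionFinEquiv d : ℕ)
      = (q : ℤ) ^ n - 1 := by
    calc _ = ∑ i : Fin n, ((q : ℤ) - 1) * (q : ℤ) ^ (i : ℕ) := by
          simp only [finFunctionFinEquiv_apply, Nat.cast_sum, Nat.cast_mul, Nat.cast_pow,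
            ← sum_add_distrib, ← add_mul, Fin.val_rev]
          refine sum_congr rfl fun i _ => ?_
          have := (d i).isLt
          push_cast [Nat.sub_sub, Nat.cast_sub (show (d i : ℕ) + 1 ≤ q by omega)]
          ring
      _ = (q : ℤ) ^ n - 1 := by
          rw [← mul_sum, Fin.sum_univ_eq_sum_range (fun i => (q : ℤ) ^ i), mul_comm, geom_sum_mul]
  have h1 := (finFunctionFinEquiv fun i => (d i).rev).isLt
  have h2 := (finFunctionFinEquiv d).isLt
  rw [← Nat.cast_pow] at hsum
  ext
  rw [Fin.val_rev]
  omega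

section DigitEncoding

variable {α : Type*} {q : ℕ}

def digitEncode (ξ : Fin q ≃ α) (n : ℕ) : (Fin n → α) ≃ Fin (q ^ n) :=
  (Equiv.piCongrRight fun _ => ξ.symm).trans finFunctionFinEquiv

theorem digitEncode_val (ξ : Fin q ≃ α) {n : ℕ} (v : Fin n → α) :
    (digitEncode ξ n v : ℕ) = ∑ i, (ξ.symm (v i) : ℕ) * q ^ (i : ℕ) :=
  finFunctionFinEquiv_apply _

theorem digitEncode_symm_rev [Sub α] {ξ : Fin q ≃ α} {ω : α} (hξ : ∀ a, ξ a.rev = ω - ξ a)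
    {n : ℕ} (j : Fin (q ^ n)) :
    (digitEncode ξ n).symm j.rev = fun i => ω - (digitEncode ξ n).symm j i := by
  obtain ⟨d, rfl⟩ := finFunctionFinEquiv.surjective j
  rw [← finFunctionFinEquiv_rev]
  ext i
  simp [digitEncode, hξ]

end DigitEncoding

theorem IsOAOn.mul_sum_digitEncode_pow {α ι : Type*} [Fintype α] [DecidableEq α] [Fintype ι]
    {q k t e : ℕ} (ξ : Fin q ≃ α) {A : Fin k → ι → α} (hA : IsOAOn t A 1) (htk : t ≤ k)
    (he : e ≤ t) :
    q ^ (k - t) * ∑ c, (digitEncode ξ k (fun i => A i c) : ℕ) ^ e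
      = ∑ v, (digitEncode ξ k v : ℕ) ^ e := by
  have h := hA.smul_sum_pow htk he fun i a => (ξ.symm a : ℕ) * q ^ (i : ℕ)
  simp only [smul_eq_mul, one_mul, Fintype.card_congr ξ.symm, Fintype.card_fin] at h
  simp only [digitEncode_val, h]

theorem sum_digitEncode {α M : Type*} [Fintype α] [AddCommMonoid M] {q n : ℕ} (ξ : Fin q ≃ α)
    (φ : ℕ → M) : ∑ v, φ (digitEncode ξ n v) = ∑ x ∈ range (q ^ n), φ x := by
  rw [(digitEncode ξ n).sum_comp fun x => φ x, Fin.sum_univ_eq_sum_range]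

theorem isMultimagic_of_mul_sum_pow_eq {n t : ℕ} (hn : 0 < n) {M : Fin n → Fin n → ℕ}
    (hlt : ∀ i j, M i j < n ^ 2) (hinj : Function.Injective fun p : Fin n × Fin n => M p.1 p.2)
    (T : ℕ → ℕ) (hrow : ∀ e ≤ t, ∀ i, n * ∑ j, M i j ^ e = T e)
    (hcol : ∀ e ≤ t, ∀ j, n * ∑ i, M i j ^ e = T e)
    (hdiag : ∀ e ≤ t, n * ∑ i, M i i ^ e = T e)
    (hanti : ∀ e ≤ t, n * ∑ i, M i i.rev ^ e = T e) :
    IsMultimagic n t M := by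
  have hS {e x : ℕ} (h : n * x = T e) : x = T e / n := Nat.eq_div_of_mul_eq_right hn.ne' h
  refine ⟨hlt, hinj, fun e _ he => ⟨T e / n, fun i => hS (hrow e he i), fun j => hS (hcol e he j),
    hS (hdiag e he), hS (hanti e he)⟩⟩

theorem sum_sum_comp_eq_sum_of_existsUnique {ι κ β M : Type*} [Fintype ι] [Fintype κ]
    [Fintype β] [AddCommMonoid M] (E : ι ≃ κ) {g : κ → κ → β}
    (hg : ∀ v, ∃! p : κ × κ, g p.2 p.1 = v)
    (φ : β → M) : ∑ s, ∑ j, φ (g (E s) (E j)) = ∑ v, φ v := by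
  calc ∑ s, ∑ j, φ (g (E s) (E j)) = ∑ H, ∑ Y, φ (g H Y) := by
        rw [← E.sum_comp]
        exact sum_congr rfl fun s _ => E.sum_comp fun Y => φ (g (E s) Y)
    _ = ∑ p : κ × κ, φ (g p.2 p.1) := (Fintype.sum_prod_type_right' fun Y H => φ (g H Y)).symm
    _ = ∑ v, φ v := ((Function.bijective_iff_existsUnique _).2 hg).sum_comp φ

section EncodedSquares

variable {α : Type*} {q t : ℕ} (ξ : Fin q ≃ α)
  (C : (Fin t → α) → (Fin t → α) → (Fin t → α) → Fin (2 * t) → α)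

def encodedSquare (H : Fin t → α) (i j : Fin (q ^ t)) : ℕ :=
  digitEncode ξ (2 * t) (C H ((digitEncode ξ t).symm i) ((digitEncode ξ t).symm j))

theorem isMultimagic_encodedSquare [Fintype α] [DecidableEq α] [Nonempty α] [Sub α] {ω : α}
    (hξ : ∀ a, ξ a.rev = ω - ξ a) {H : Fin t → α}
    (hinj : Function.Injective fun p : (Fin t → α) × (Fin t → α) => C H p.1 p.2)
    (hrow : ∀ X, IsOAOn t (fun i Y => C H X Y i) 1)
    (hcol : ∀ Y, IsOAOn t (fun i X => C H X Y i) 1)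
    (hdiag : IsOAOn t (fun i X => C H X X i) 1)
    (hback : IsOAOn t (fun i X => C H X (fun j => ω - X j) i) 1) :
    IsMultimagic (q ^ t) t (encodedSquare ξ C H) := by
  set E := (digitEncode ξ t).symm
  have hq : 0 < q := (ξ.symm (Classical.arbitrary α)).pos
  have hline {L : (Fin t → α) → Fin (2 * t) → α} (hL : IsOAOn t (fun i c => L c i) 1)
      {e : ℕ} (he : e ≤ t) :
      q ^ t * ∑ c, (digitEncode ξ (2 * t) (L c) : ℕ) ^ e
        = ∑ v, (digitEncode ξ (2 * t) v : ℕ) ^ e := by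
    simpa [two_mul] using hL.mul_sum_digitEncode_pow ξ (by omega) he
  refine isMultimagic_of_mul_sum_pow_eq (pow_pos hq t) (fun i j => ?_) (fun p p' h => ?_)
    (fun e => ∑ v, (digitEncode ξ (2 * t) v : ℕ) ^ e) (fun e he i => ?_) (fun e he j => ?_)
    (fun e he => ?_) (fun e he => ?_)
  · rw [← pow_mul, mul_comm]
    exact (digitEncode ξ (2 * t) _).isLt
  · have := @hinj (E p.1, E p.2) (E p'.1, E p'.2)
      ((digitEncode ξ (2 * t)).injective (Fin.val_injective h))
    exact Prod.ext (E.injective (congrArg Prod.fst this)) (E.injective (congrArg Prod.snd this))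
  · rw [← hline (hrow (E i)) he, ← E.sum_comp]
    rfl
  · rw [← hline (hcol (E j)) he, ← E.sum_comp]
    rfl
  · rw [← hline hdiag he, ← E.sum_comp]
    rfl
  · simp only [encodedSquare, digitEncode_symm_rev hξ]
    rw [← hline hback he, ← E.sum_comp]

theorem sum_sum_digitEncode_pow [Fintype α] {g : (Fin t → α) → (Fin t → α) → Fin (2 * t) → α}
    (hg : ∀ v, ∃! p : (Fin t → α) × (Fin t → α), g p.2 p.1 = v) (p : ℕ) :
    ∑ s, ∑ j, (digitEncode ξ (2 * t) (g ((digitEncode ξ t).symm s) ((digitEncode ξ t).symm j))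
      : ℕ) ^ p = ∑ x ∈ range ((q ^ t) ^ 2), x ^ p := by
  rw [sum_sum_comp_eq_sum_of_existsUnique _ hg fun v => (digitEncode ξ (2 * t) v : ℕ) ^ p,
    sum_digitEncode ξ fun x => x ^ p, ← pow_mul, mul_comm]

end EncodedSquares

/-- Given `q^t` SDLOA(q^t; t, 2t, q)'s `C_H` (written as `q^t × q^t`
matrices with rows/columns indexed by `F_q^t` and entries in `F_q^{2t}`: each row,
each column, the main diagonal and the back diagonal of `C_H` form an OA, and the
rows of `C_H` form an LOA), such that the row collections `R_X`, column collections
`T_Y`, the diagonal collection `U` and the back-diagonal collection `U'` each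
contain every vector of `F_q^{2t}` exactly once, there exists a q^t-CMS(q^t, t). -/
theorem cms_of_sdloa_family {F : Type} [Field F] [Fintype F] [DecidableEq F] {t : ℕ}
    (xi : Fin (Fintype.card F) → F) (hxi : Function.Bijective xi)
    (omega : F) (hsum : ∀ j, xi j + xi (Fin.rev j) = omega)
    (C : (Fin t → F) → (Fin t → F) → (Fin t → F) → Fin (2 * t) → F)
    -- each C_H is an SDLOA(q^t; t, 2t, q):
    (hrows : ∀ H, IsLOAOn t (fun (X : Fin t → F) (i : Fin (2 * t)) (Y : Fin t → F) =>
      C H X Y i) 1)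
    (hcols : ∀ H Y, IsOAOn t (fun (i : Fin (2 * t)) (X : Fin t → F) => C H X Y i) 1)
    (hdiag : ∀ H, IsOAOn t (fun (i : Fin (2 * t)) (X : Fin t → F) => C H X X i) 1)
    (hback : ∀ H, IsOAOn t (fun (i : Fin (2 * t)) (X : Fin t → F) =>
      C H X (fun j => omega - X j) i) 1)
    -- the collections R_X, T_Y, U, U' each cover F_q^{2t} exactly once:
    (hR : ∀ X : Fin t → F, ∀ v : Fin (2 * t) → F,
      ∃! p : (Fin t → F) × (Fin t → F), C p.2 X p.1 = v)
    (hT : ∀ Y : Fin t → F, ∀ v : Fin (2 * t) → F,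
      ∃! p : (Fin t → F) × (Fin t → F), C p.2 p.1 Y = v)
    (hU : ∀ v : Fin (2 * t) → F,
      ∃! p : (Fin t → F) × (Fin t → F), C p.2 p.1 p.1 = v)
    (hU' : ∀ v : Fin (2 * t) → F,
      ∃! p : (Fin t → F) × (Fin t → F), C p.2 p.1 (fun j => omega - p.1 j) = v) :
    ∃ B : Fin (Fintype.card F ^ t) → Fin (Fintype.card F ^ t) → Fin (Fintype.card F ^ t) → ℕ,
      IsCMS (Fintype.card F ^ t) (Fintype.card F ^ t) t B := by
  set ξ := Equiv.ofBijective xi hxi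
  have hξ (a : Fin (Fintype.card F)) : ξ a.rev = omega - ξ a := eq_sub_of_add_eq' (hsum a)
  set E := (digitEncode ξ t).symm
  refine ⟨fun s => encodedSquare ξ C (E s), fun s => ?_, fun i => ?_, fun j => ?_, ?_, ?_⟩
  · exact isMultimagic_encodedSquare ξ C hξ
      ((Function.bijective_iff_existsUnique _).2 (hrows _).2).1 (fun X => ((hrows _).1 X).1)
      (hcols _) (hdiag _) (hback _)
  · exact congrArg _ (sum_sum_digitEncode_pow ξ (g := fun H Y => C H (E i) Y) (hR (E i)) _)
  · exact congrArg _ (sum_sum_digitEncode_pow ξ (g := fun H X => C H X (E j)) (hT (E j)) _)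
  · exact congrArg _ (sum_sum_digitEncode_pow ξ (g := fun H X => C H X X) hU _)
  · simp only [encodedSquare, digitEncode_symm_rev hξ]
    exact congrArg _
      (sum_sum_digitEncode_pow ξ (g := fun H X => C H X (fun j => omega - X j)) hU' _)
end

section
/- Let q ≥ 4 be a prime power and suppose there exists a 2t×t matrix over F_q in which any t rows are linearly independent. Then there exists a q^t-CMS(q^t, t). -/
open Finset

set_option linter.unusedSectionVars false
set_option linter.unnecessarySimpa false

open Matrix Equiv

section AuxCMS



lemma cycleType_of_sq_eq_one {β : Type*} [Fintype β] [DecidableEq β] (σ : Equiv.Perm β)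
    (h2 : σ * σ = 1) : σ.cycleType = Multiset.replicate (σ.support.card / 2) 2 := by
  have hall : ∀ b ∈ σ.cycleType, b = 2 := by
    intro b hb
    have hge := Equiv.Perm.two_le_of_mem_cycleType hb
    have hdvd : b ∣ orderOf σ := (Multiset.dvd_lcm hb).trans (by rw [Equiv.Perm.lcm_cycleType])
    have h2' : orderOf σ ∣ 2 := orderOf_dvd_of_pow_eq_one (by rw [pow_two]; exact h2)
    have := Nat.le_of_dvd (by norm_num) (hdvd.trans h2')
    omega
  have hrep : σ.cycleType = Multiset.replicate (Multiset.card σ.cycleType) 2 :=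
    Multiset.eq_replicate_card.mpr hall
  have hsum := σ.sum_cycleType
  rw [hrep, Multiset.sum_replicate, smul_eq_mul] at hsum
  rw [hrep]; congr 1; omega

lemma exists_phi (F : Type) [Field F] [Fintype F] [DecidableEq F] (hq : 2 ≤ Fintype.card F) :
    ∃ (φ : F ≃ Fin (Fintype.card F)) (c₀ : F), ∀ a : F, φ (c₀ - a) = Fin.rev (φ a) := by
  classical
  set q := Fintype.card F with hqdef
  set p := ringChar F with hp
  haveI : CharP F p := ringChar.charP F
  obtain ⟨n, hpp, hcard⟩ := FiniteField.card F p
  set c₀ : F := if p = 2 then 1 else 0 with hc₀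
  have hτinv : ∀ a : F, c₀ - (c₀ - a) = a := fun a => by ring
  let τ : Equiv.Perm F := ⟨fun a => c₀ - a, fun a => c₀ - a, hτinv, hτinv⟩
  have hτ : ∀ a, τ a = c₀ - a := fun a => rfl
  let e0 : F ≃ Fin q := Fintype.equivFin F
  let τ₀ : Equiv.Perm (Fin q) := (e0.symm.trans τ).trans e0
  have hτ₀ : ∀ x, τ₀ x = e0 (τ (e0.symm x)) := fun x => rfl
  have hτ₀sq : τ₀ * τ₀ = 1 := by
    ext x
    simp only [Equiv.Perm.mul_apply, hτ₀, Equiv.symm_apply_apply, hτ, hτinv, Equiv.apply_symm_apply,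
      Equiv.Perm.one_apply]
  have hrevsq : (Fin.revPerm : Equiv.Perm (Fin q)) * Fin.revPerm = 1 := by
    ext x; simp
  -- fixed point counts agree
  have hfixτ : (univ.filter fun a : F => τ a = a).card
      = (univ.filter fun x : Fin q => Fin.revPerm x = x).card := by
    by_cases hp2 : p = 2
    · -- char 2 : no fixed points on either side
      haveI : CharP F 2 := by rw [← hp2]; infer_instance
      have h1 : (univ.filter fun a : F => τ a = a) = ∅ := by
        apply Finset.filter_eq_empty_iff.mpr
        intro a _
        rw [hτ, hc₀, if_pos hp2]
        intro hfix
        have : (1 : F) = a + a := by linear_combination hfix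
        rw [CharTwo.add_self_eq_zero] at this
        exact one_ne_zero this
      have hqeven : q % 2 = 0 := by
        have : (2:ℕ) ∣ q := by
          rw [hqdef, hcard, hp2]; exact dvd_pow_self 2 n.pos.ne'
        omega
      have h2 : (univ.filter fun x : Fin q => Fin.revPerm x = x) = ∅ := by
        apply Finset.filter_eq_empty_iff.mpr
        intro x _
        simp only [Fin.revPerm_apply]
        intro hfix
        have := congrArg Fin.val hfix
        simp only [Fin.val_rev] at this
        have := x.isLt
        omega
      rw [h1, h2]; rfl
    · -- odd characteristic : exactly one fixed point on either side
      have h2F : (2 : F) ≠ 0 := by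
        intro h20
        have := (CharP.cast_eq_zero_iff F p 2).mp (by exact_mod_cast h20)
        have := Nat.le_of_dvd (by norm_num) this
        interval_cases p
        · exact Nat.not_prime_zero hpp
        · exact Nat.not_prime_one hpp
        · exact hp2 rfl
      have hqodd : q % 2 = 1 := by
        have hpodd : Odd p := hpp.odd_of_ne_two hp2
        have : Odd q := by rw [hqdef, hcard]; exact hpodd.pow
        exact Nat.odd_iff.mp this
      have h1 : (univ.filter fun a : F => τ a = a) = {0} := by
        ext a
        simp only [Finset.mem_filter, Finset.mem_univ, true_and, Finset.mem_singleton, hτ, hc₀,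
          if_neg hp2]
        constructor
        · intro hfix
          have : (2 : F) * a = 0 := by linear_combination -hfix
          rcases mul_eq_zero.mp this with h | h
          · exact absurd h h2F
          · exact h
        · rintro rfl; simp
      have h2 : (univ.filter fun x : Fin q => Fin.revPerm x = x) = {⟨(q-1)/2, by omega⟩} := by
        ext x
        simp only [Finset.mem_filter, Finset.mem_univ, true_and, Finset.mem_singleton,
          Fin.revPerm_apply, Fin.ext_iff, Fin.val_rev]
        have := x.isLt
        omega
      rw [h1, h2]; simp
  -- conjugate the involutions
  have hsupp : τ₀.support.card = (Fin.revPerm : Equiv.Perm (Fin q)).support.card := by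
    have key : ∀ σ : Equiv.Perm (Fin q),
        σ.support.card = q - (univ.filter fun x : Fin q => σ x = x).card := by
      intro σ
      have hs : σ.support = univ.filter fun x => ¬ σ x = x := by
        ext x; simp [Equiv.Perm.mem_support]
      have hpart := Finset.card_filter_add_card_filter_not
        (s := (univ : Finset (Fin q))) (p := fun x : Fin q => σ x = x)
      simp only [Finset.card_univ, Fintype.card_fin] at hpart
      rw [hs]; omega
    have hb : (univ.filter fun x : Fin q => τ₀ x = x).card
        = (univ.filter fun a : F => τ a = a).card := by
      apply Finset.card_bij (fun x _ => e0.symm x)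
      · intro x hx; simp only [mem_filter, mem_univ, true_and] at hx ⊢
        have h' : e0.symm (τ₀ x) = e0.symm x := by rw [hx]
        rw [hτ₀, Equiv.symm_apply_apply] at h'
        exact h'
      · intro x _ y _ hxy; exact e0.symm.injective hxy
      · intro a ha; refine ⟨e0 a, ?_, by simp⟩
        simp only [mem_filter, mem_univ, true_and] at ha ⊢
        rw [hτ₀, Equiv.symm_apply_apply, ha]
    rw [key, key, hb, hfixτ]
  have hconj : IsConj τ₀ (Fin.revPerm : Equiv.Perm (Fin q)) := by
    rw [Equiv.Perm.isConj_iff_cycleType_eq, cycleType_of_sq_eq_one _ hτ₀sq,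
      cycleType_of_sq_eq_one _ hrevsq, hsupp]
  obtain ⟨π, hπ⟩ := hconj
  refine ⟨e0.trans (π : Equiv.Perm (Fin q)), c₀, fun a => ?_⟩
  have hsc : (π : Equiv.Perm (Fin q)) * τ₀ = Fin.revPerm * (π : Equiv.Perm (Fin q)) := hπ.eq
  have := congrArg (fun σ : Equiv.Perm (Fin q) => σ (e0 a)) hsc
  simp only [Equiv.Perm.mul_apply] at this
  rw [hτ₀, Equiv.symm_apply_apply, hτ] at this
  simpa using this


variable {F : Type} [Field F] [Fintype F] [DecidableEq F]

noncomputable def NE (φ : F ≃ Fin (Fintype.card F)) (t : ℕ) :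
    (Fin t → F) ≃ Fin (Fintype.card F ^ t) :=
  (Equiv.piCongrRight fun _ => φ).trans finFunctionFinEquiv

lemma NE_apply (φ : F ≃ Fin (Fintype.card F)) (t : ℕ) (w : Fin t → F) :
    ((NE φ t w : ℕ)) = ∑ i : Fin t, (φ (w i) : ℕ) * (Fintype.card F) ^ (i : ℕ) := by
  simpa [NE] using finFunctionFinEquiv_apply (fun i => φ (w i))

lemma geom_nat (q : ℕ) (hq : 1 ≤ q) (t : ℕ) :
    ∑ i ∈ Finset.range t, (q - 1) * q ^ i = q ^ t - 1 := by
  induction t with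
  | zero => simp
  | succ t ih =>
    rw [Finset.sum_range_succ, ih]
    have h1 : 1 ≤ q ^ t := Nat.one_le_pow _ _ hq
    have h2 : q ^ (t+1) = q * q ^ t := by ring
    have h3 : (q - 1) * q ^ t = q * q ^ t - q ^ t := by rw [Nat.sub_mul, one_mul]
    have h4 : 1 * q ^ t ≤ q * q ^ t := Nat.mul_le_mul_right _ hq
    omega

lemma NE_rev (φ : F ≃ Fin (Fintype.card F)) (c₀ : F)
    (hφ : ∀ a : F, φ (c₀ - a) = Fin.rev (φ a)) (t : ℕ) (w : Fin t → F) :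
    NE φ t (fun i => c₀ - w i) = Fin.rev (NE φ t w) := by
  have hq : 1 ≤ Fintype.card F := Fintype.card_pos
  have key : ((NE φ t (fun i => c₀ - w i) : ℕ)) + ((NE φ t w : ℕ)) = Fintype.card F ^ t - 1 := by
    rw [NE_apply, NE_apply, ← Finset.sum_add_distrib]
    have : ∀ i : Fin t, (φ (c₀ - w i) : ℕ) * Fintype.card F ^ (i : ℕ)
        + (φ (w i) : ℕ) * Fintype.card F ^ (i : ℕ)
        = (Fintype.card F - 1) * Fintype.card F ^ (i : ℕ) := by
      intro i
      rw [hφ]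
      have h1 : ((Fin.rev (φ (w i)) : ℕ)) = Fintype.card F - 1 - (φ (w i) : ℕ) := by
        simp [Fin.val_rev]; omega
      have h2 := (φ (w i)).isLt
      rw [h1, ← add_mul]
      congr 1
      omega
    rw [Finset.sum_congr rfl fun i _ => this i]
    rw [Fin.sum_univ_eq_sum_range (fun i => (Fintype.card F - 1) * Fintype.card F ^ i)]
    exact geom_nat _ hq t
  have h1 := (NE φ t (fun i => c₀ - w i)).isLt
  have h2 := (NE φ t w).isLt
  apply Fin.ext
  rw [Fin.val_rev]
  omega

lemma exists_ac (hq : 4 ≤ Fintype.card F) :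
    ∃ a c : F, a ≠ c ∧ a ≠ 0 ∧ a ≠ 1 ∧ a ≠ -1 ∧ c ≠ 0 ∧ c ≠ 1 ∧ c ≠ -1 := by
  classical
  set S : Finset F := {0, 1, -1} with hS
  have hcompl : 1 < Sᶜ.card := by
    rw [Finset.card_compl]
    by_cases h2 : (2 : F) = 0
    · have hm : (-1 : F) = 1 := by linear_combination -h2
      have hS2 : S = {0, 1} := by rw [hS, hm]; simp
      have : S.card ≤ 2 := by
        rw [hS2]
        apply le_trans (Finset.card_insert_le _ _)
        simp
      omega
    · have hcard : S.card ≤ 3 := by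
        rw [hS]
        apply le_trans (Finset.card_insert_le _ _)
        have : ({1, -1} : Finset F).card ≤ 2 := by
          apply le_trans (Finset.card_insert_le _ _)
          simp
        omega
      -- q is odd since char ≠ 2
      have hodd : Fintype.card F % 2 = 1 := by
        set p := ringChar F with hp
        haveI : CharP F p := ringChar.charP F
        obtain ⟨n, hpp, hcardF⟩ := FiniteField.card F p
        have hp2 : p ≠ 2 := by
          intro h
          haveI : CharP F 2 := by rw [← h]; infer_instance
          exact h2 (CharTwo.two_eq_zero)
        have : Odd p := hpp.odd_of_ne_two hp2
        have : Odd (Fintype.card F) := by rw [hcardF]; exact this.pow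
        exact Nat.odd_iff.mp this
      omega
  obtain ⟨x, hx, y, hy, hxy⟩ := Finset.one_lt_card.mp hcompl
  rw [Finset.mem_compl, hS] at hx hy
  simp only [Finset.mem_insert, Finset.mem_singleton, not_or] at hx hy
  exact ⟨x, y, hxy, hx.1, hx.2.1, hx.2.2, hy.1, hy.2.1, hy.2.2⟩

-- dot products with independent rows kill a vector
lemma eq_zero_of_dots {t : ℕ} (r : Fin t → (Fin t → F)) (hr : LinearIndependent F r)
    (z : Fin t → F) (hz : ∀ i, r i ⬝ᵥ z = 0) : z = 0 := by
  classical
  have hspan : Submodule.span F (Set.range r) = ⊤ := by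
    apply hr.span_eq_top_of_card_eq_finrank'
    simp [Module.finrank_pi]
  let f : (Fin t → F) →ₗ[F] F :=
    { toFun := fun v => v ⬝ᵥ z
      map_add' := fun u v => add_dotProduct u v z
      map_smul' := fun k v => smul_dotProduct k v z }
  have hf : f = 0 := by
    apply LinearMap.ext_on hspan
    rintro v ⟨i, rfl⟩
    exact hz i
  funext j
  have := congrArg (fun g => g (Pi.single j 1)) hf
  simp only [LinearMap.zero_apply] at this
  have h' : (Pi.single j (1:F)) ⬝ᵥ z = 0 := this
  rwa [single_dotProduct, one_mul] at h'

lemma rowsIndep_smul {t : ℕ} (E1 : Matrix (Fin (2*t)) (Fin t) F) (hE1 : RowsIndep t E1)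
    (γ : Fin (2*t) → F) (hγ : ∀ i, γ i ≠ 0) :
    RowsIndep t (Matrix.of fun i => γ i • E1 i) := by
  intro rows hrows
  have h := (hE1 rows hrows).units_smul (fun k => Units.mk0 (γ (rows k)) (hγ _))
  convert h using 1
  ext k j; simp [Units.smul_def]

lemma inj_master {t : ℕ} (E1 : Matrix (Fin (2*t)) (Fin t) F) (hE1 : RowsIndep t E1)
    (kT1 kT2 kB1 kB2 : F) (hdet : kT1 * kB2 - kT2 * kB1 ≠ 0) (b : Fin (2*t) → F) :
    Function.Bijective (fun p : (Fin t → F) × (Fin t → F) => fun i : Fin (2*t) =>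
      E1 i ⬝ᵥ ((if (i : ℕ) < t then kT1 else kB1) • p.1
        + (if (i : ℕ) < t then kT2 else kB2) • p.2) + b i) := by
  rw [Fintype.bijective_iff_injective_and_card]
  constructor
  · intro p p' h
    set z1 := p.1 - p'.1 with hz1
    set z2 := p.2 - p'.2 with hz2
    have hrow : ∀ i : Fin (2*t),
        E1 i ⬝ᵥ ((if (i : ℕ) < t then kT1 else kB1) • z1
          + (if (i : ℕ) < t then kT2 else kB2) • z2) = 0 := by
      intro i
      have := congrFun h i
      simp only at this
      have h' : E1 i ⬝ᵥ ((if (i : ℕ) < t then kT1 else kB1) • p.1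
          + (if (i : ℕ) < t then kT2 else kB2) • p.2)
          = E1 i ⬝ᵥ ((if (i : ℕ) < t then kT1 else kB1) • p'.1
          + (if (i : ℕ) < t then kT2 else kB2) • p'.2) := add_right_cancel this
      rw [dotProduct_add, dotProduct_add] at h'
      rw [dotProduct_add, hz1, hz2]
      rw [smul_sub, smul_sub, dotProduct_sub, dotProduct_sub]
      rw [← sub_eq_zero] at *
      linear_combination h'
    -- top rows
    have htop : kT1 • z1 + kT2 • z2 = 0 := by
      apply eq_zero_of_dots (fun k : Fin t => E1 ⟨k, by omega⟩)
      · exact hE1 (fun k : Fin t => ⟨(k : ℕ), by omega⟩)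
          (fun x y hxy => by
            simp only [Fin.mk.injEq] at hxy
            exact Fin.ext hxy)
      · intro k
        have := hrow ⟨(k : ℕ), by omega⟩
        rw [dotProduct_add] at this ⊢
        simpa [k.isLt] using this
    have hbot : kB1 • z1 + kB2 • z2 = 0 := by
      apply eq_zero_of_dots (fun k : Fin t => E1 ⟨t + (k : ℕ), by omega⟩)
      · exact hE1 (fun k : Fin t => ⟨t + (k : ℕ), by omega⟩)
          (fun x y hxy => by
            simp only [Fin.mk.injEq] at hxy
            exact Fin.ext (by omega))
      · intro k
        have := hrow ⟨t + (k : ℕ), by omega⟩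
        rw [dotProduct_add] at this ⊢
        simpa using this
    have hz1' : z1 = 0 := by
      have h3 : (kT1 * kB2 - kT2 * kB1) • z1
          = kB2 • (kT1 • z1 + kT2 • z2) - kT2 • (kB1 • z1 + kB2 • z2) := by
        funext j; simp [smul_smul, Pi.smul_apply, sub_smul]; ring
      rw [htop, hbot] at h3
      simp only [smul_zero, sub_zero] at h3
      exact (smul_eq_zero.mp h3).resolve_left hdet
    have hz2' : z2 = 0 := by
      have h3 : (kT1 * kB2 - kT2 * kB1) • z2
          = kT1 • (kB1 • z1 + kB2 • z2) - kB1 • (kT1 • z1 + kT2 • z2) := by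
        funext j; simp [smul_smul, Pi.smul_apply, sub_smul]; ring
      rw [htop, hbot] at h3
      simp only [smul_zero, sub_zero, zero_sub, neg_eq_zero] at h3
      exact (smul_eq_zero.mp h3).resolve_left hdet
    have e1 : p.1 = p'.1 := sub_eq_zero.mp (by rw [← hz1]; exact hz1')
    have e2 : p.2 = p'.2 := sub_eq_zero.mp (by rw [← hz2]; exact hz2')
    exact Prod.ext e1 e2
  · simp only [Fintype.card_prod, Fintype.card_fun, Fintype.card_fin]
    rw [← pow_add]
    congr 1
    omega

lemma sum_pow_of_bij {t : ℕ} (φ : F ≃ Fin (Fintype.card F)) (m : ℕ)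
    (Φ : (Fin t → F) × (Fin t → F) → (Fin (2*t) → F)) (hΦ : Function.Bijective Φ) :
    ∑ p : (Fin t → F) × (Fin t → F), ((NE φ (2*t) (Φ p) : ℕ)) ^ m
      = ∑ k ∈ Finset.range ((Fintype.card F ^ t) ^ 2), k ^ m := by
  have h1 : ∑ p : (Fin t → F) × (Fin t → F), ((NE φ (2*t) (Φ p) : ℕ)) ^ m
      = ∑ w : Fin (2*t) → F, ((NE φ (2*t) w : ℕ)) ^ m :=
    Equiv.sum_comp (Equiv.ofBijective Φ hΦ) (fun w => ((NE φ (2*t) w : ℕ)) ^ m)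
  have h2 : ∑ w : Fin (2*t) → F, ((NE φ (2*t) w : ℕ)) ^ m
      = ∑ x : Fin (Fintype.card F ^ (2*t)), (x : ℕ) ^ m :=
    Equiv.sum_comp (NE φ (2*t)) (fun x : Fin (Fintype.card F ^ (2*t)) => (x : ℕ) ^ m)
  rw [h1, h2, Fin.sum_univ_eq_sum_range (fun k => k ^ m)]
  have h3 : (Fintype.card F ^ t) ^ 2 = Fintype.card F ^ (2 * t) := by
    rw [← pow_mul, mul_comm]
  rw [h3]


-- affine bijection from independent rows selection
lemma affine_bij {t : ℕ} (L : Matrix (Fin (2*t)) (Fin t) F) (hL : RowsIndep t L)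
    (ρ : Fin t → Fin (2*t)) (hρ : Function.Injective ρ) (b : Fin (2*t) → F) :
    Function.Bijective (fun y : Fin t → F => fun k : Fin t => (L.mulVec y + b) (ρ k)) := by
  have hli : LinearIndependent F fun k : Fin t => L (ρ k) := hL ρ hρ
  set M : Matrix (Fin t) (Fin t) F := fun k j => L (ρ k) j with hM
  have hunit : IsUnit M := by
    rw [← Matrix.linearIndependent_rows_iff_isUnit]
    exact hli
  have hinjM : Function.Injective M.mulVec := Matrix.mulVec_injective_iff_isUnit.mpr hunit
  have hinj : Function.Injective
      (fun y : Fin t → F => fun k : Fin t => (L.mulVec y + b) (ρ k)) := by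
    intro y y' h
    apply hinjM
    funext k
    have := congrFun h k
    simp only [Pi.add_apply] at this
    have h' : (L.mulVec y) (ρ k) = (L.mulVec y') (ρ k) := by
      exact add_right_cancel this
    simpa [Matrix.mulVec, hM] using h'
  exact Finite.injective_iff_bijective.mp hinj

lemma lineSum {t : ℕ} (φ : F ≃ Fin (Fintype.card F)) (e : ℕ) (he : e ≤ t)
    (L L' : Matrix (Fin (2*t)) (Fin t) F) (hL : RowsIndep t L) (hL' : RowsIndep t L')
    (b b' : Fin (2*t) → F) :
    ∑ y : Fin t → F, ((NE φ (2*t) (L.mulVec y + b) : ℕ)) ^ e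
      = ∑ y : Fin t → F, ((NE φ (2*t) (L'.mulVec y + b') : ℕ)) ^ e := by
  classical
  have key : ∀ g : Fin e → Fin (2*t),
      ∑ y : Fin t → F, ∏ j : Fin e, (φ ((L.mulVec y + b) (g j)) : ℕ)
        = ∑ y : Fin t → F, ∏ j : Fin e, (φ ((L'.mulVec y + b') (g j)) : ℕ) := by
    intro g
    obtain ⟨T, hsub, hcard⟩ := Finset.exists_superset_card_eq
      (s := Finset.univ.image g) (n := t)
      (le_trans (le_trans Finset.card_image_le (by simp)) he)
      (by simp; omega)
    set ρ : Fin t → Fin (2*t) := fun k => (T.orderIsoOfFin hcard k : Fin (2*t)) with hρdef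
    have hρ : Function.Injective ρ :=
      fun a b h => (T.orderIsoOfFin hcard).injective (Subtype.coe_injective h)
    have hmem : ∀ j, g j ∈ T := fun j => hsub (Finset.mem_image_of_mem g (Finset.mem_univ j))
    set k : Fin e → Fin t := fun j => (T.orderIsoOfFin hcard).symm ⟨g j, hmem j⟩ with hk
    have hgk : ∀ j, ρ (k j) = g j := by
      intro j
      simp only [hρdef, hk, OrderIso.apply_symm_apply]
    have calc1 : ∀ (L₀ : Matrix (Fin (2*t)) (Fin t) F) (hL₀ : RowsIndep t L₀)
        (b₀ : Fin (2*t) → F),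
        ∑ y : Fin t → F, ∏ j : Fin e, (φ ((L₀.mulVec y + b₀) (g j)) : ℕ)
          = ∑ z : Fin t → F, ∏ j : Fin e, (φ (z (k j)) : ℕ) := by
      intro L₀ hL₀ b₀
      have hb := affine_bij L₀ hL₀ ρ hρ b₀
      rw [← Equiv.sum_comp (Equiv.ofBijective _ hb)
        (fun z : Fin t → F => ∏ j : Fin e, (φ (z (k j)) : ℕ))]
      apply Finset.sum_congr rfl
      intro y _
      apply Finset.prod_congr rfl
      intro j _
      simp only [Equiv.ofBijective_apply, hgk]
    rw [calc1 L hL b, calc1 L' hL' b']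
  -- now expand the power
  have expand : ∀ (w : Fin (2*t) → F),
      ((NE φ (2*t) w : ℕ)) ^ e
        = ∑ g : Fin e → Fin (2*t),
            (∏ j : Fin e, (φ (w (g j)) : ℕ)) * ∏ j : Fin e, (Fintype.card F) ^ ((g j : ℕ)) := by
    intro w
    calc ((NE φ (2*t) w : ℕ)) ^ e
        = ∏ _j : Fin e, ∑ i : Fin (2*t), (φ (w i) : ℕ) * (Fintype.card F) ^ (i : ℕ) := by
          rw [Finset.prod_const, Finset.card_univ, Fintype.card_fin, NE_apply]
      _ = ∑ g ∈ Fintype.piFinset (fun _ : Fin e => (Finset.univ : Finset (Fin (2*t)))),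
            ∏ j : Fin e, ((φ (w (g j)) : ℕ) * (Fintype.card F) ^ ((g j : ℕ))) :=
          Finset.prod_univ_sum _ _
      _ = ∑ g : Fin e → Fin (2*t),
            (∏ j : Fin e, (φ (w (g j)) : ℕ)) * ∏ j : Fin e, (Fintype.card F) ^ ((g j : ℕ)) := by
          rw [Fintype.piFinset_univ]
          exact Finset.sum_congr rfl fun g _ => Finset.prod_mul_distrib
  rw [Finset.sum_congr rfl fun y (_ : y ∈ Finset.univ) => expand (L.mulVec y + b),
    Finset.sum_congr rfl fun y (_ : y ∈ Finset.univ) => expand (L'.mulVec y + b')]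
  rw [Finset.sum_comm, Finset.sum_comm (s := (Finset.univ : Finset (Fin t → F)))]
  apply Finset.sum_congr rfl
  intro g _
  rw [← Finset.sum_mul, ← Finset.sum_mul, key g]


set_option maxHeartbeats 2000000 in
theorem main_aux {t : ℕ}
    (E1 : Matrix (Fin (2*t)) (Fin t) F) (hE1 : RowsIndep t E1)
    (φ : F ≃ Fin (Fintype.card F)) (c₀ : F) (hφ : ∀ x : F, φ (c₀ - x) = Fin.rev (φ x))
    (a c : F) (hac : a ≠ c) (ha0 : a ≠ 0) (ha1 : a ≠ 1) (han : a ≠ -1)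
    (hc0 : c ≠ 0) (hc1 : c ≠ 1) (hcn : c ≠ -1) :
    IsCMS (Fintype.card F ^ t) (Fintype.card F ^ t) t (fun s i j =>
      ((NE φ (2*t) (fun r : Fin (2*t) =>
        E1 r ⬝ᵥ ((if (r : ℕ) < t then a else c) • (NE φ t).symm i
          + (NE φ t).symm j
          + (if (r : ℕ) < t then (1:F) else 0) • (NE φ t).symm s)) : ℕ))) := by
  classical
  have h2t : Fintype.card F ^ (2*t) = (Fintype.card F ^ t) ^ 2 := by
    rw [← pow_mul, mul_comm]
  -- scalar facts
  have hα0 : ∀ r : Fin (2*t), (if (r : ℕ) < t then a else c) ≠ 0 := by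
    intro r; split <;> assumption
  have hα1 : ∀ r : Fin (2*t), (if (r : ℕ) < t then a else c) + 1 ≠ 0 := by
    intro r; split
    · intro h; exact han (by linear_combination h)
    · intro h; exact hcn (by linear_combination h)
  have hαm1 : ∀ r : Fin (2*t), (if (r : ℕ) < t then a else c) - 1 ≠ 0 := by
    intro r; split
    · exact sub_ne_zero.mpr ha1
    · exact sub_ne_zero.mpr hc1
  -- common magic constant
  set S : ℕ → ℕ := fun e => ∑ y : Fin t → F, ((NE φ (2*t) (E1.mulVec y) : ℕ)) ^ e with hS
  -- generic line-sum evaluation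
  have lineS : ∀ (γ : Fin (2*t) → F), (∀ r, γ r ≠ 0) → ∀ (b : Fin (2*t) → F) (e : ℕ), e ≤ t →
      ∑ x : Fin t → F, ((NE φ (2*t) (fun r => (γ r • E1 r) ⬝ᵥ x + b r) : ℕ)) ^ e = S e := by
    intro γ hγ b e he
    have hL : RowsIndep t (Matrix.of fun r => γ r • E1 r) := rowsIndep_smul E1 hE1 γ hγ
    have h1 := lineSum φ e he (Matrix.of fun r => γ r • E1 r) E1 hL hE1 b 0
    have h2 : ∀ y : Fin t → F,
        ((Matrix.of fun r => γ r • E1 r).mulVec y + b) = fun r => (γ r • E1 r) ⬝ᵥ y + b r := by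
      intro y; funext r; simp [Matrix.mulVec, dotProduct, Finset.mul_sum, mul_assoc]
    have h3 : ∀ y : Fin t → F, E1.mulVec y + 0 = E1.mulVec y := fun y => by simp
    calc ∑ x : Fin t → F, ((NE φ (2*t) (fun r => (γ r • E1 r) ⬝ᵥ x + b r) : ℕ)) ^ e
        = ∑ y : Fin t → F, ((NE φ (2*t) ((Matrix.of fun r => γ r • E1 r).mulVec y + b) : ℕ)) ^ e := by
          apply Finset.sum_congr rfl; intro y _; rw [h2 y]
      _ = ∑ y : Fin t → F, ((NE φ (2*t) (E1.mulVec y + 0) : ℕ)) ^ e := h1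
      _ = S e := by apply Finset.sum_congr rfl; intro y _; rw [h3 y]
  -- generic complementary-sum evaluation
  have compS : ∀ (kT1 kT2 kB1 kB2 : F), kT1 * kB2 - kT2 * kB1 ≠ 0 → ∀ b : Fin (2*t) → F,
      ∑ p : (Fin t → F) × (Fin t → F), ((NE φ (2*t) (fun r =>
        E1 r ⬝ᵥ ((if (r : ℕ) < t then kT1 else kB1) • p.1
          + (if (r : ℕ) < t then kT2 else kB2) • p.2) + b r) : ℕ)) ^ (t+1)
        = ∑ k ∈ Finset.range ((Fintype.card F ^ t) ^ 2), k ^ (t+1) := by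
    intro kT1 kT2 kB1 kB2 hdet b
    exact sum_pow_of_bij φ (t+1) _ (inj_master E1 hE1 kT1 kT2 kB1 kB2 hdet b)
  -- rev of index
  have hrev : ∀ i : Fin (Fintype.card F ^ t),
      (NE φ t).symm (Fin.rev i) = fun k => c₀ - (NE φ t).symm i k := by
    intro i
    apply (NE φ t).injective
    rw [Equiv.apply_symm_apply, NE_rev φ c₀ hφ t, Equiv.apply_symm_apply]
  refine ⟨fun s => ⟨?_, ?_, ?_⟩, ?_, ?_, ?_, ?_⟩
  · -- bound
    intro i j
    rw [← h2t]
    exact Fin.is_lt _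
  · -- injectivity of each square
    have hdet : a * 1 - 1 * c ≠ 0 := by simpa using sub_ne_zero.mpr hac
    have hbij := inj_master E1 hE1 a 1 c 1 hdet
      (fun r => E1 r ⬝ᵥ ((if (r : ℕ) < t then (1:F) else 0) • (NE φ t).symm s))
    intro p p' hpp
    simp only at hpp
    have key : ∀ i j : Fin (Fintype.card F ^ t),
        (fun r : Fin (2*t) => E1 r ⬝ᵥ ((if (r : ℕ) < t then a else c) • (NE φ t).symm i
          + (NE φ t).symm j
          + (if (r : ℕ) < t then (1:F) else 0) • (NE φ t).symm s))
        = (fun r : Fin (2*t) =>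
            E1 r ⬝ᵥ ((if (r : ℕ) < t then a else c) • (NE φ t).symm i
              + (if (r : ℕ) < t then (1:F) else 1) • (NE φ t).symm j)
            + E1 r ⬝ᵥ ((if (r : ℕ) < t then (1:F) else 0) • (NE φ t).symm s)) := by
      intro i j
      funext r
      rw [← dotProduct_add]
      congr 1
      funext k
      by_cases hr : (r : ℕ) < t <;> simp [hr] <;> ring
    rw [key p.1 p.2, key p'.1 p'.2] at hpp
    have h1 : (((NE φ t).symm p.1, (NE φ t).symm p.2) : (Fin t → F) × (Fin t → F))
        = (((NE φ t).symm p'.1, (NE φ t).symm p'.2) : (Fin t → F) × (Fin t → F)) :=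
      hbij.injective ((NE φ (2*t)).injective (Fin.val_injective hpp))
    have h11 : (NE φ t).symm p.1 = (NE φ t).symm p'.1 := congrArg Prod.fst h1
    have h12 : (NE φ t).symm p.2 = (NE φ t).symm p'.2 := congrArg Prod.snd h1
    exact Prod.ext ((NE φ t).symm.injective h11) ((NE φ t).symm.injective h12)
  · -- magic sums for each square
    intro e he1 het
    refine ⟨S e, ?_, ?_, ?_, ?_⟩
    · -- rows
      intro i
      rw [← Equiv.sum_comp (NE φ t) (fun j => ((NE φ (2*t) (fun r : Fin (2*t) =>
        E1 r ⬝ᵥ ((if (r : ℕ) < t then a else c) • (NE φ t).symm i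
          + (NE φ t).symm j
          + (if (r : ℕ) < t then (1:F) else 0) • (NE φ t).symm s)) : ℕ)) ^ e)]
      rw [← lineS (fun _ => 1) (fun _ => one_ne_zero)
        (fun r => E1 r ⬝ᵥ ((if (r : ℕ) < t then a else c) • (NE φ t).symm i
          + (if (r : ℕ) < t then (1:F) else 0) • (NE φ t).symm s)) e het]
      apply Finset.sum_congr rfl
      intro y _
      refine congrArg (fun f : Fin (2*t) → F => ((NE φ (2*t)) f : ℕ) ^ e) ?_
      funext r
      rw [one_smul, ← dotProduct_add]
      rw [Equiv.symm_apply_apply]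
      congr 1
      funext k
      by_cases hr : (r : ℕ) < t <;> simp [hr] <;> ring
    · -- columns
      intro j
      rw [← Equiv.sum_comp (NE φ t) (fun i => ((NE φ (2*t) (fun r : Fin (2*t) =>
        E1 r ⬝ᵥ ((if (r : ℕ) < t then a else c) • (NE φ t).symm i
          + (NE φ t).symm j
          + (if (r : ℕ) < t then (1:F) else 0) • (NE φ t).symm s)) : ℕ)) ^ e)]
      rw [← lineS (fun r => if (r : ℕ) < t then a else c) hα0
        (fun r => E1 r ⬝ᵥ ((NE φ t).symm j
          + (if (r : ℕ) < t then (1:F) else 0) • (NE φ t).symm s)) e het]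
      apply Finset.sum_congr rfl
      intro x _
      refine congrArg (fun f : Fin (2*t) → F => ((NE φ (2*t)) f : ℕ) ^ e) ?_
      funext r
      rw [smul_dotProduct, ← dotProduct_smul, ← dotProduct_add]
      rw [Equiv.symm_apply_apply]
      congr 1
      funext k
      by_cases hr : (r : ℕ) < t <;> simp [hr] <;> ring
    · -- diagonal
      rw [← Equiv.sum_comp (NE φ t) (fun i => ((NE φ (2*t) (fun r : Fin (2*t) =>
        E1 r ⬝ᵥ ((if (r : ℕ) < t then a else c) • (NE φ t).symm i
          + (NE φ t).symm i
          + (if (r : ℕ) < t then (1:F) else 0) • (NE φ t).symm s)) : ℕ)) ^ e)]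
      rw [← lineS (fun r => (if (r : ℕ) < t then a else c) + 1) hα1
        (fun r => E1 r ⬝ᵥ ((if (r : ℕ) < t then (1:F) else 0) • (NE φ t).symm s)) e het]
      apply Finset.sum_congr rfl
      intro x _
      refine congrArg (fun f : Fin (2*t) → F => ((NE φ (2*t)) f : ℕ) ^ e) ?_
      funext r
      rw [smul_dotProduct, ← dotProduct_smul, ← dotProduct_add]
      rw [Equiv.symm_apply_apply]
      congr 1
      funext k
      by_cases hr : (r : ℕ) < t <;> simp [hr] <;> ring
    · -- antidiagonal
      rw [← Equiv.sum_comp (NE φ t) (fun i => ((NE φ (2*t) (fun r : Fin (2*t) =>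
        E1 r ⬝ᵥ ((if (r : ℕ) < t then a else c) • (NE φ t).symm i
          + (NE φ t).symm (Fin.rev i)
          + (if (r : ℕ) < t then (1:F) else 0) • (NE φ t).symm s)) : ℕ)) ^ e)]
      rw [← lineS (fun r => (if (r : ℕ) < t then a else c) - 1) hαm1
        (fun r => E1 r ⬝ᵥ ((fun _ => c₀)
          + (if (r : ℕ) < t then (1:F) else 0) • (NE φ t).symm s)) e het]
      apply Finset.sum_congr rfl
      intro x _
      refine congrArg (fun f : Fin (2*t) → F => ((NE φ (2*t)) f : ℕ) ^ e) ?_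
      funext r
      rw [smul_dotProduct, ← dotProduct_smul, ← dotProduct_add]
      rw [hrev, Equiv.symm_apply_apply]
      congr 1
      funext k
      by_cases hr : (r : ℕ) < t <;> simp [hr] <;> ring
  · -- row complementarity
    intro i
    congr 1
    have step1 : (∑ s : Fin (Fintype.card F ^ t), ∑ j : Fin (Fintype.card F ^ t),
        ((NE φ (2*t) (fun r : Fin (2*t) =>
          E1 r ⬝ᵥ ((if (r : ℕ) < t then a else c) • (NE φ t).symm i
            + (NE φ t).symm j
            + (if (r : ℕ) < t then (1:F) else 0) • (NE φ t).symm s)) : ℕ)) ^ (t+1))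
        = ∑ p : (Fin t → F) × (Fin t → F),
        ((NE φ (2*t) (fun r : Fin (2*t) =>
          E1 r ⬝ᵥ ((if (r : ℕ) < t then a else c) • (NE φ t).symm i
            + (NE φ t).symm (NE φ t p.2)
            + (if (r : ℕ) < t then (1:F) else 0) • (NE φ t).symm (NE φ t p.1))) : ℕ)) ^ (t+1) := by
      rw [← Fintype.sum_prod_type']
      exact (Equiv.sum_comp (Equiv.prodCongr (NE φ t) (NE φ t)) _).symm
    rw [step1]
    rw [← compS 1 1 0 1 (by norm_num)
      (fun r => E1 r ⬝ᵥ ((if (r : ℕ) < t then a else c) • (NE φ t).symm i))]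
    apply Finset.sum_congr rfl
    intro p _
    refine congrArg (fun f : Fin (2*t) → F => ((NE φ (2*t)) f : ℕ) ^ (t+1)) ?_
    funext r
    rw [Equiv.symm_apply_apply, Equiv.symm_apply_apply, ← dotProduct_add]
    congr 1
    funext k
    by_cases hr : (r : ℕ) < t <;> simp [hr] <;> ring
  · -- column complementarity
    intro j
    congr 1
    have step1 : (∑ s : Fin (Fintype.card F ^ t), ∑ i : Fin (Fintype.card F ^ t),
        ((NE φ (2*t) (fun r : Fin (2*t) =>
          E1 r ⬝ᵥ ((if (r : ℕ) < t then a else c) • (NE φ t).symm i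
            + (NE φ t).symm j
            + (if (r : ℕ) < t then (1:F) else 0) • (NE φ t).symm s)) : ℕ)) ^ (t+1))
        = ∑ p : (Fin t → F) × (Fin t → F),
        ((NE φ (2*t) (fun r : Fin (2*t) =>
          E1 r ⬝ᵥ ((if (r : ℕ) < t then a else c) • (NE φ t).symm (NE φ t p.2)
            + (NE φ t).symm j
            + (if (r : ℕ) < t then (1:F) else 0) • (NE φ t).symm (NE φ t p.1))) : ℕ)) ^ (t+1) := by
      rw [← Fintype.sum_prod_type']
      exact (Equiv.sum_comp (Equiv.prodCongr (NE φ t) (NE φ t)) _).symm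
    rw [step1]
    rw [← compS 1 a 0 c (by simpa using hc0)
      (fun r => E1 r ⬝ᵥ ((NE φ t).symm j))]
    apply Finset.sum_congr rfl
    intro p _
    refine congrArg (fun f : Fin (2*t) → F => ((NE φ (2*t)) f : ℕ) ^ (t+1)) ?_
    funext r
    rw [Equiv.symm_apply_apply, Equiv.symm_apply_apply, ← dotProduct_add]
    congr 1
    funext k
    by_cases hr : (r : ℕ) < t <;> simp [hr] <;> ring
  · -- diagonal complementarity
    congr 1
    have hc1' : c + 1 ≠ 0 := fun h => hcn (by linear_combination h)
    have step1 : (∑ s : Fin (Fintype.card F ^ t), ∑ i : Fin (Fintype.card F ^ t),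
        ((NE φ (2*t) (fun r : Fin (2*t) =>
          E1 r ⬝ᵥ ((if (r : ℕ) < t then a else c) • (NE φ t).symm i
            + (NE φ t).symm i
            + (if (r : ℕ) < t then (1:F) else 0) • (NE φ t).symm s)) : ℕ)) ^ (t+1))
        = ∑ p : (Fin t → F) × (Fin t → F),
        ((NE φ (2*t) (fun r : Fin (2*t) =>
          E1 r ⬝ᵥ ((if (r : ℕ) < t then a else c) • (NE φ t).symm (NE φ t p.2)
            + (NE φ t).symm (NE φ t p.2)
            + (if (r : ℕ) < t then (1:F) else 0) • (NE φ t).symm (NE φ t p.1))) : ℕ)) ^ (t+1) := by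
      rw [← Fintype.sum_prod_type']
      exact (Equiv.sum_comp (Equiv.prodCongr (NE φ t) (NE φ t)) _).symm
    rw [step1]
    rw [← compS 1 (a+1) 0 (c+1) (by simpa using hc1')
      (fun _ => (0 : F))]
    apply Finset.sum_congr rfl
    intro p _
    refine congrArg (fun f : Fin (2*t) → F => ((NE φ (2*t)) f : ℕ) ^ (t+1)) ?_
    funext r
    rw [Equiv.symm_apply_apply, Equiv.symm_apply_apply]
    rw [show ∀ x : F, x + 0 = x from fun x => add_zero x]
    congr 1
    funext k
    by_cases hr : (r : ℕ) < t <;> simp [hr] <;> ring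
  · -- antidiagonal complementarity
    congr 1
    have hcm1' : c - 1 ≠ 0 := sub_ne_zero.mpr hc1
    have step1 : (∑ s : Fin (Fintype.card F ^ t), ∑ i : Fin (Fintype.card F ^ t),
        ((NE φ (2*t) (fun r : Fin (2*t) =>
          E1 r ⬝ᵥ ((if (r : ℕ) < t then a else c) • (NE φ t).symm i
            + (NE φ t).symm (Fin.rev i)
            + (if (r : ℕ) < t then (1:F) else 0) • (NE φ t).symm s)) : ℕ)) ^ (t+1))
        = ∑ p : (Fin t → F) × (Fin t → F),
        ((NE φ (2*t) (fun r : Fin (2*t) =>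
          E1 r ⬝ᵥ ((if (r : ℕ) < t then a else c) • (NE φ t).symm (NE φ t p.2)
            + (NE φ t).symm (Fin.rev (NE φ t p.2))
            + (if (r : ℕ) < t then (1:F) else 0) • (NE φ t).symm (NE φ t p.1))) : ℕ)) ^ (t+1) := by
      rw [← Fintype.sum_prod_type']
      exact (Equiv.sum_comp (Equiv.prodCongr (NE φ t) (NE φ t)) _).symm
    rw [step1]
    rw [← compS 1 (a-1) 0 (c-1) (by simpa using hcm1')
      (fun r => E1 r ⬝ᵥ (fun _ => c₀))]
    apply Finset.sum_congr rfl
    intro p _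
    refine congrArg (fun f : Fin (2*t) → F => ((NE φ (2*t)) f : ℕ) ^ (t+1)) ?_
    funext r
    rw [hrev, Equiv.symm_apply_apply, Equiv.symm_apply_apply, ← dotProduct_add]
    congr 1
    funext k
    by_cases hr : (r : ℕ) < t <;> simp [hr] <;> ring

end AuxCMS

/-- If `q ≥ 4` is a prime power and there is a `2t × t` matrix over
`F_q` in which any `t` rows are linearly independent, then there exists a
q^t-CMS(q^t, t). -/
theorem cms_of_rows_indep {F : Type} [Field F] [Fintype F] [DecidableEq F] {t : ℕ}
    (hq : 4 ≤ Fintype.card F)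
    (h : ∃ E1 : Matrix (Fin (2 * t)) (Fin t) F, RowsIndep t E1) :
    ∃ B : Fin (Fintype.card F ^ t) → Fin (Fintype.card F ^ t) → Fin (Fintype.card F ^ t) → ℕ,
      IsCMS (Fintype.card F ^ t) (Fintype.card F ^ t) t B := by
  classical
  obtain ⟨E1, hE1⟩ := h
  obtain ⟨φ, c₀, hφ⟩ := exists_phi F (by omega)
  obtain ⟨a, c, hac, ha0, ha1, han, hc0, hc1, hcn⟩ := exists_ac hq
  exact ⟨_, main_aux E1 hE1 φ c₀ hφ a c hac ha0 ha1 han hc0 hc1 hcn⟩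
end

section
/- Let q be a prime power with q ≥ 2t−1 and t ≥ 2, let x be a primitive element of F_q, and let E be the 2t×t matrix over F_q whose first row is (1,0,...,0), whose second row is (0,...,0,1), and whose remaining 2t−2 rows are the Vandermonde rows (1, x^i, x^{2i}, ..., x^{(t-1)i}) for i = 1,...,2t−2. Then any t rows of E are linearly independent. -/
/-!
Up to the choice of homogeneous coordinates, the row of `E` at a point `(a : b)` of the
projective line over `F` is `(a ^ j * b ^ (t - 1 - j))_j`, a row of a rectangular projective
Vandermonde matrix: row `0` belongs to the point `0`, row `1` to `∞`, and row `i ≥ 2` to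
`x ^ (i - 1)`. These `2t` points are distinct because `x` has order `q - 1 ≥ 2t - 2`, and any
`t` rows at distinct points form a square projective Vandermonde matrix, whose determinant
`∏_{i < j} (a_j b_i - a_i b_j)` does not vanish.
-/

open Finset

open Matrix Function

section ProjectiveVandermonde

variable {K : Type*} [Field K] {n : ℕ}

theorem linearIndependent_projVandermonde {v w : Fin n → K}
    (h : Pairwise fun i j => v i * w j ≠ v j * w i) :
    LinearIndependent K (projVandermonde v w).row := by
  rw [linearIndependent_rows_iff_isUnit, isUnit_iff_isUnit_det, isUnit_iff_ne_zero,
    det_projVandermonde]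
  exact prod_ne_zero_iff.mpr fun i _ => prod_ne_zero_iff.mpr fun j hj =>
    sub_ne_zero.mpr (h (mem_Ioi.mp hj).ne')

theorem rowsIndep_rectVandermonde {α : Type*} {v w : α → K}
    (h : Pairwise fun i j => v i * w j ≠ v j * w i) :
    RowsIndep n (rectVandermonde v w n) := fun r hr =>
  linearIndependent_projVandermonde (v := v ∘ r) (w := w ∘ r) fun _ _ hij => h (hr.ne hij)

/-- Homogeneous coordinates of a point of the projective line `Option K`,
where `none` is the point at infinity. -/
def projLineCoords : Option K → K × K
  | some a => (a, 1)
  | none => (1, 0)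

theorem projLineCoords_cross_ne {p q : Option K} (h : p ≠ q) :
    (projLineCoords p).1 * (projLineCoords q).2 ≠ (projLineCoords q).1 * (projLineCoords p).2 := by
  cases p <;> cases q <;> simp_all [projLineCoords]

theorem rowsIndep_rectVandermonde_projLineCoords {α : Type*} {P : α → Option K}
    (hP : Injective P) :
    RowsIndep n (rectVandermonde (fun i => (projLineCoords (P i)).1)
      (fun i => (projLineCoords (P i)).2) n) :=
  rowsIndep_rectVandermonde fun _ _ hij => projLineCoords_cross_ne (hP.ne hij)

theorem rectVandermonde_projLineCoords_some {α : Type*} {P : α → Option K} {i : α} {a : K}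
    (hi : P i = some a) (j : Fin n) :
    rectVandermonde (fun i => (projLineCoords (P i)).1) (fun i => (projLineCoords (P i)).2) n i j =
      a ^ (j : ℕ) := by
  simp [rectVandermonde_apply, hi, projLineCoords]

theorem rectVandermonde_projLineCoords_none {α : Type*} {P : α → Option K} {i : α}
    (hi : P i = none) (j : Fin n) :
    rectVandermonde (fun i => (projLineCoords (P i)).1) (fun i => (projLineCoords (P i)).2) n i j =
      if (j : ℕ) = n - 1 then 1 else 0 := by
  simp only [rectVandermonde_apply, hi, projLineCoords, one_pow, one_mul, Fin.val_rev, zero_pow_eq]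
  congr 1
  grind

end ProjectiveVandermonde

theorem IsPrimitiveRoot.pow_injOn_Icc_one {M : Type*} [CommMonoid M] {ζ : M} {k : ℕ}
    (h : IsPrimitiveRoot ζ k) : Set.InjOn (ζ ^ ·) (Set.Icc 1 k) := by
  rintro m ⟨hm1, hmk⟩ m' ⟨hm'1, hm'k⟩ hpow
  have hpred : ζ ^ (m - 1) = ζ ^ (m' - 1) :=
    (h.isUnit (by omega)).mul_left_cancel <| by
      rwa [← pow_succ', ← pow_succ', Nat.sub_add_cancel hm1, Nat.sub_add_cancel hm'1]
  have := h.pow_inj (by omega) (by omega) hpred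
  omega

section FiniteField

variable {K : Type*} [Field K] [Fintype K] {x : K}

theorem ne_zero_of_forall_exists_pow_eq (hK : 2 < Fintype.card K)
    (hx : ∀ y : K, y ≠ 0 → ∃ n : ℕ, x ^ n = y) : x ≠ 0 := by
  classical
  obtain ⟨y, -, hy⟩ := exists_mem_notMem_of_card_lt_card (s := ({0, 1} : Finset K)) (t := univ)
    ((card_insert_le _ _).trans_lt (by simpa using hK))
  simp only [mem_insert, mem_singleton, not_or] at hy
  obtain ⟨n, rfl⟩ := hx y hy.1
  rintro rfl
  rcases n with _ | n <;> simp_all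

theorem isPrimitiveRoot_card_sub_one_of_forall_exists_pow_eq (hx0 : x ≠ 0)
    (hx : ∀ y : K, y ≠ 0 → ∃ n : ℕ, x ^ n = y) :
    IsPrimitiveRoot x (Fintype.card K - 1) := by
  have hgen : ∀ u : Kˣ, u ∈ Subgroup.zpowers (Units.mk0 x hx0) := fun u => by
    obtain ⟨n, hn⟩ := hx u u.ne_zero
    exact ⟨n, Units.ext (by simp [hn])⟩
  rw [← Nat.card_eq_fintype_card, ← Nat.card_units,
    ← orderOf_eq_card_of_forall_mem_zpowers hgen, ← orderOf_units]
  exact IsPrimitiveRoot.orderOf x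

end FiniteField

theorem vandermonde_rows_indep_general {F : Type} [Field F] [Fintype F] {t : ℕ}
    (ht : 2 ≤ t) (hq : 2 * t - 1 ≤ Fintype.card F)
    (x : F) (hx : ∀ y : F, y ≠ 0 → ∃ n : ℕ, x ^ n = y)
    (E : Matrix (Fin (2 * t)) (Fin t) F)
    (hE : ∀ (i : Fin (2 * t)) (j : Fin t),
      E i j = if (i : ℕ) = 0 then (if (j : ℕ) = 0 then 1 else 0)
        else if (i : ℕ) = 1 then (if (j : ℕ) = t - 1 then 1 else 0)
        else x ^ (((i : ℕ) - 1) * (j : ℕ))) :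
    RowsIndep t E := by
  have hx0 : x ≠ 0 := ne_zero_of_forall_exists_pow_eq (by omega) hx
  have hprim := isPrimitiveRoot_card_sub_one_of_forall_exists_pow_eq hx0 hx
  let a : Fin (2 * t) → F := fun i => if (i : ℕ) = 0 then 0 else x ^ ((i : ℕ) - 1)
  let P : Fin (2 * t) → Option F := fun i => if (i : ℕ) = 1 then none else some (a i)
  have hP : Injective P := by
    intro i j hij
    have hi := i.isLt
    have hj := j.isLt
    simp only [P, a] at hij
    split_ifs at hij <;> simp only [Option.some.injEq] at hij
    · omega
    · omega
    · exact absurd hij.symm (pow_ne_zero _ hx0)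
    · exact absurd hij (pow_ne_zero _ hx0)
    · have := hprim.pow_injOn_Icc_one ⟨by omega, by omega⟩ ⟨by omega, by omega⟩ hij
      omega
  convert rowsIndep_rectVandermonde_projLineCoords (n := t) hP
  ext i j
  rw [hE]
  by_cases hi1 : (i : ℕ) = 1
  · rw [rectVandermonde_projLineCoords_none (by simp [P, hi1])]
    simp [hi1]
  · rw [rectVandermonde_projLineCoords_some (a := a i) (by simp [P, hi1])]
    split_ifs <;> simp_all [a, pow_mul]

/-- For a prime power `q ≥ 2t-1` (`t ≥ 2`) and a primitive element
`x` of `F_q`, the `2t × t` matrix with first row `(1,0,…,0)`, second row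
`(0,…,0,1)`, and remaining rows the Vandermonde rows `(1, x^i, …, x^{(t-1)i})`
for `i = 1, …, 2t-2`, has any `t` rows linearly independent. -/
theorem vandermonde_rows_indep {F : Type} [Field F] [Fintype F] [DecidableEq F] {t : ℕ}
    (ht : 2 ≤ t) (hq : 2 * t - 1 ≤ Fintype.card F)
    (x : F) (hx : ∀ y : F, y ≠ 0 → ∃ n : ℕ, x ^ n = y)
    (E : Matrix (Fin (2 * t)) (Fin t) F)
    (hE : ∀ (i : Fin (2 * t)) (j : Fin t),
      E i j = if (i : ℕ) = 0 then (if (j : ℕ) = 0 then 1 else 0)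
        else if (i : ℕ) = 1 then (if (j : ℕ) = t - 1 then 1 else 0)
        else x ^ (((i : ℕ) - 1) * (j : ℕ))) :
    RowsIndep t E :=
  vandermonde_rows_indep_general ht hq x hx E hE
end

section
/- Let E_1, E_2 be 2t×t matrices over F_q such that E_2 has any t rows linearly independent and the 2t×2t matrix (E_2, E_1 + d·E_2) is nonsingular for some d ∈ F_q. Then for each fixed X ∈ F_q^t, the map (Y, H) ↦ E_1·X + E_2·Y + (E_1 + d·E_2)·H is a bijection from F_q^t × F_q^t onto F_q^{2t}, and the resulting multiset of q^{2t} vectors, arranged as columns of a 2t × q^{2t} array, forms an LOA(q^t; t, 2t, q) when partitioned appropriately; in particular every vector of F_q^{2t} occurs exactly once. -/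
open Finset

/-
Any `t` rows of `E₂` form an invertible `t × t` matrix, so in each array
`Y ↦ v + E₂ Y` the projection onto any `t` rows is a bijection in `Y`: strength `t`,
index `1`, and (as `t ≤ 2t`) simplicity. Nonsingularity of `(E₂, E₁ + d E₂)` makes
`(Y, H) ↦ E₁ X + E₂ Y + (E₁ + d E₂) H` a bijection, which is the partition property.
-/

open Function Matrix

section OrthogonalArray

variable {α ι : Type*} [Fintype α] [DecidableEq α] [Fintype ι] {k t : ℕ}

theorem isOAOn_one_iff (A : Fin k → ι → α) :
    IsOAOn t A 1 ↔
      ∀ rows : Fin t → Fin k, Injective rows → Bijective fun c i => A (rows i) c := by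
  simp only [IsOAOn, card_eq_one_iff_existsUnique, mem_filter, mem_univ, true_and,
    bijective_iff_existsUnique, funext_iff]

theorem IsOAOn.isSimpleArr {A : Fin k → ι → α} (hA : IsOAOn t A 1) (htk : t ≤ k) :
    IsSimpleArr A := fun _ _ hcc' =>
  ((isOAOn_one_iff A).1 hA (Fin.castLE htk) (Fin.castLE_injective htk)).1
    (funext fun _ => congrFun hcc' _)

end OrthogonalArray

section Linear

variable {F : Type*} [Field F] {t : ℕ}

theorem RowsIndep.bijective_mulVec_comp {m : Type*} {M : Matrix m (Fin t) F}
    (hM : RowsIndep t M) {rows : Fin t → m} (hrows : Injective rows) :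
    Bijective fun Y : Fin t → F => fun i => (M *ᵥ Y) (rows i) := by
  have hunit : IsUnit (M.submatrix rows id) :=
    linearIndependent_rows_iff_isUnit.mp (hM rows hrows)
  exact ⟨mulVec_injective_iff_isUnit.mpr hunit, mulVec_surjective_iff_isUnit.mpr hunit⟩

theorem isOAOn_add_mulVec [Fintype F] [DecidableEq F] {k : ℕ} {M : Matrix (Fin k) (Fin t) F}
    (hM : RowsIndep t M) (w : Fin k → F) :
    IsOAOn t (fun i (Y : Fin t → F) => (w + M *ᵥ Y) i) 1 :=
  (isOAOn_one_iff _).2 fun _ hrows =>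
    (Equiv.addLeft _).bijective.comp (hM.bijective_mulVec_comp hrows)

end Linear

/-- If `E₂` has any `t` rows independent and `(E₂, E₁+dE₂)` is
nonsingular, then for each fixed `X` the map `(Y,H) ↦ E₁X + E₂Y + (E₁+dE₂)H` is a
bijection onto `F_q^{2t}`, and the resulting family (one array per `H`, columns
indexed by `Y`) is an LOA(q^t; t, 2t, q); in particular every vector of
`F_q^{2t}` occurs exactly once. -/
theorem loa_of_translates {F : Type} [Field F] [Fintype F] [DecidableEq F] {t : ℕ}
    (d : F) (E1 E2 : Matrix (Fin (2 * t)) (Fin t) F)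
    (h2 : RowsIndep t E2)
    (hns : NonsingularPair E2 (E1 + d • E2)) :
    ∀ X : Fin t → F,
      (Function.Bijective fun p : (Fin t → F) × (Fin t → F) =>
        E1.mulVec X + E2.mulVec p.1 + (E1 + d • E2).mulVec p.2) ∧
      IsLOAOn t (fun (H : Fin t → F) (i : Fin (2 * t)) (Y : Fin t → F) =>
        (E1.mulVec X + E2.mulVec Y + (E1 + d • E2).mulVec H) i) 1 := by
  intro X
  set B := E1 + d • E2
  have hbij : Bijective fun p : (Fin t → F) × (Fin t → F) => E1 *ᵥ X + E2 *ᵥ p.1 + B *ᵥ p.2 := by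
    simpa only [comp_def, Equiv.coe_addLeft, add_assoc] using
      (Equiv.addLeft (E1 *ᵥ X)).bijective.comp hns
  have hOA : ∀ H, IsOAOn t (fun i Y => (E1 *ᵥ X + E2 *ᵥ Y + B *ᵥ H) i) 1 := fun H => by
    simpa only [add_right_comm _ (B *ᵥ H)] using isOAOn_add_mulVec h2 (E1 *ᵥ X + B *ᵥ H)
  refine ⟨hbij, fun H => ⟨hOA H, (hOA H).isSimpleArr (by omega)⟩, ?_⟩
  exact (hbij.comp (Equiv.prodComm _ _).bijective).existsUnique
end
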